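/- arXiv:2602.15739 — 2 statements merged into one kernel-verified Lean document; each statement's English description precedes it below -/
import Mathlib

section
/- Let N be a WF-net such that from every marking reachable from the initial marking [source] there exists a firing sequence leading to the marking [sink]. Then [sink] is the only marking reachable from [source] that contains at least one token in the sink place (i.e., the option to complete implies proper completion). -/
/-!
Common formalization of Petri nets, workflow nets (WF-nets), POWL 2.0 models,
and the WF-net-to-POWL conversion algorithm.
-/

noncomputable section
attribute [local instance] Classical.propDecidable

/-- A Petri-net-like structure over natural-number nodes, with designated
source/sink places and a labeling of transitions (`none` = silent τ). -/
structure Net where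
  places : Finset ℕ
  transitions : Finset ℕ
  flow : Finset (ℕ × ℕ)
  label : ℕ → Option ℕ
  source : ℕ
  sink : ℕ

abbrev Marking := ℕ → ℕ

namespace Net

/-- Pre-set of a node. -/
def pre (N : Net) (x : ℕ) : Finset ℕ := (N.flow.filter fun e => e.2 = x).image Prod.fst

/-- Post-set of a node. -/
def post (N : Net) (x : ℕ) : Finset ℕ := (N.flow.filter fun e => e.1 = x).image Prod.snd

/-- `N` is a Petri net: places and transitions are finite disjoint sets and
the flow only connects places to transitions and vice versa. -/
def IsPetri (N : Net) : Prop :=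
  Disjoint N.places N.transitions ∧
  ∀ e ∈ N.flow, (e.1 ∈ N.places ∧ e.2 ∈ N.transitions) ∨ (e.1 ∈ N.transitions ∧ e.2 ∈ N.places)

/-- Directed-path (reflexive-transitive) reachability along the flow relation. -/
def pathRel (N : Net) : ℕ → ℕ → Prop := Relation.ReflTransGen (fun a b => (a, b) ∈ N.flow)

/-- `N` is a workflow net: a Petri net with a unique source place, a unique
sink place, and every node on a path from the source to the sink. -/
def IsWF (N : Net) : Prop :=
  N.IsPetri ∧
  N.source ∈ N.places ∧ N.sink ∈ N.places ∧
  (∀ p ∈ N.places, N.pre p = ∅ ↔ p = N.source) ∧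
  (∀ p ∈ N.places, N.post p = ∅ ↔ p = N.sink) ∧
  (∀ x ∈ N.places ∪ N.transitions, N.pathRel N.source x ∧ N.pathRel x N.sink)

/-- A transition is enabled at a marking if every place of its pre-set holds a token. -/
def enabled (N : Net) (t : ℕ) (M : Marking) : Prop :=
  t ∈ N.transitions ∧ ∀ p ∈ N.pre t, 1 ≤ M p

/-- Firing an enabled transition consumes one token from each input place and
produces one token in each output place. -/
def fire (N : Net) (t : ℕ) (M M' : Marking) : Prop :=
  N.enabled t M ∧
  ∀ p, M' p + (if p ∈ N.pre t then 1 else 0) = M p + (if p ∈ N.post t then 1 else 0)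

/-- `N.firingSeq M σ M'`: firing the sequence σ of transitions leads from M to M'. -/
def firingSeq (N : Net) : Marking → List ℕ → Marking → Prop
  | M, [], M' => M' = M
  | M, t :: σ, M' => ∃ M₁, N.fire t M M₁ ∧ N.firingSeq M₁ σ M'

/-- A marking is reachable from another if some firing sequence leads to it. -/
def reachable (N : Net) (M M' : Marking) : Prop := ∃ σ, N.firingSeq M σ M'

/-- The initial marking [source]. -/
def initM (N : Net) : Marking := fun p => if p = N.source then 1 else 0

/-- The final marking [sink]. -/
def finalM (N : Net) : Marking := fun p => if p = N.sink then 1 else 0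

/-- Soundness: no dead transitions, option to complete, proper completion. -/
def Sound (N : Net) : Prop :=
  (∀ t ∈ N.transitions, ∃ M, N.reachable N.initM M ∧ N.enabled t M) ∧
  (∀ M, N.reachable N.initM M → N.reachable M N.finalM) ∧
  (∀ M, N.reachable N.initM M → 1 ≤ M N.sink → M = N.finalM)

/-- Safeness: each place holds at most one token in every reachable marking. -/
def Safe (N : Net) : Prop :=
  ∀ M, N.reachable N.initM M → ∀ p, M p ≤ 1

/-- The language: label sequences (τ omitted) of firing sequences from [source] to [sink]. -/
def lang (N : Net) : Set (List ℕ) :=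
  { w | ∃ σ, N.firingSeq N.initM σ N.finalM ∧ w = σ.filterMap N.label }

/-- The entry points ◦T' of a set of transitions T'. -/
def entry (N : Net) (T' : Finset ℕ) : Finset ℕ :=
  N.places.filter fun p =>
    (N.post p ∩ T').Nonempty ∧ (p = N.source ∨ (N.pre p ∩ (N.transitions \ T')).Nonempty)

/-- The exit points T'◦ of a set of transitions T'. -/
def exit (N : Net) (T' : Finset ℕ) : Finset ℕ :=
  N.places.filter fun p =>
    (N.pre p ∩ T').Nonempty ∧ (p = N.sink ∨ (N.post p ∩ (N.transitions \ T')).Nonempty)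

/-- Two places are equivalent with respect to T'. -/
def equivWrt (N : Net) (T' : Finset ℕ) (p p' : ℕ) : Prop :=
  N.pre p ∩ T' = N.pre p' ∩ T' ∧ N.post p ∩ T' = N.post p' ∩ T'

/-- The places adjacent to some transition of T' (written P|_{T'}). -/
def adjP (N : Net) (T' : Finset ℕ) : Finset ℕ :=
  N.places.filter fun p => ((N.pre p ∪ N.post p) ∩ T').Nonempty

/-- A natural number larger than every node of N. -/
def freshBase (N : Net) : ℕ :=
  ((N.places ∪ N.transitions ∪ {N.source, N.sink}).sup id) + 1

end Net

/-- `G : Fin n → Finset ℕ` is a partition of the transitions of N into n nonempty parts. -/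
def IsPartition (N : Net) {n : ℕ} (G : Fin n → Finset ℕ) : Prop :=
  (∀ i, (G i).Nonempty) ∧
  (∀ i j, i ≠ j → Disjoint (G i) (G j)) ∧
  Finset.univ.biUnion G = N.transitions

/-- A conflict-hiding partition. -/
def ConflictHiding (N : Net) {n : ℕ} (G : Fin n → Finset ℕ) : Prop :=
  IsPartition N G ∧
  (∀ p, ∀ i j : Fin n, p ∈ N.entry (G i) → p ∈ N.entry (G j) → i = j) ∧
  (∀ p, ∀ i j : Fin n, p ∈ N.exit (G i) → p ∈ N.exit (G j) → i = j) ∧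
  (∀ i : Fin n, ∀ p ∈ N.entry (G i), ∀ p' ∈ N.entry (G i), N.equivWrt (G i) p p') ∧
  (∀ i : Fin n, ∀ p ∈ N.exit (G i), ∀ p' ∈ N.exit (G i), N.equivWrt (G i) p p')

/-- A concurrency-hiding partition: each part has exactly one entry and one exit point. -/
def ConcurrencyHiding (N : Net) {n : ℕ} (G : Fin n → Finset ℕ) : Prop :=
  IsPartition N G ∧ ∀ i, (N.entry (G i)).card = 1 ∧ (N.exit (G i)).card = 1

/-- Normalize(N, p_s, p_e): insert a fresh source (resp. sink) place connected
to p_s (resp. from p_e) through a fresh τ-transition whenever needed. -/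
def Normalize (N : Net) (ps pe : ℕ) : Net :=
  let b := N.freshBase
  let needS := (N.pre ps).Nonempty
  let needE := (N.post pe).Nonempty
  { places := N.places ∪ (if needS then {b} else ∅) ∪ (if needE then {b+2} else ∅)
    transitions := N.transitions ∪ (if needS then {b+1} else ∅) ∪ (if needE then {b+3} else ∅)
    flow := N.flow ∪ (if needS then {(b, b+1), (b+1, ps)} else ∅)
                   ∪ (if needE then {(pe, b+3), (b+3, b+2)} else ∅)
    label := fun x => if x = b+1 ∨ x = b+3 then none else N.label x
    source := if needS then b else ps
    sink := if needE then b+2 else pe }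

/-- The raw partial-order projection of N onto a part T' (before normalization). -/
def poprojectRaw (N : Net) (T' : Finset ℕ) : Net :=
  let b := N.freshBase
  let ps := b
  let pe := b + 1
  let keptP := (N.adjP T' \ (N.entry T' ∪ N.exit T')) ∪ {ps, pe}
  { places := keptP
    transitions := T'
    flow :=
      (N.flow.filter fun e => (e.1 ∈ keptP ∧ e.2 ∈ T') ∨ (e.1 ∈ T' ∧ e.2 ∈ keptP))
      ∪ ((T'.filter fun t => (N.entry T' ∩ N.pre t).Nonempty).image fun t => (ps, t))
      ∪ ((T'.filter fun t => (N.entry T' ∩ N.post t).Nonempty).image fun t => (t, ps))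
      ∪ ((T'.filter fun t => (N.exit T' ∩ N.pre t).Nonempty).image fun t => (pe, t))
      ∪ ((T'.filter fun t => (N.exit T' ∩ N.post t).Nonempty).image fun t => (t, pe))
    label := N.label
    source := ps
    sink := pe }

/-- The partial-order projection poproject(N, T'). -/
def poproject (N : Net) (T' : Finset ℕ) : Net :=
  let R := poprojectRaw N T'
  Normalize R R.source R.sink

/-- The raw choice-graph projection of N onto a part T' (before normalization). -/
def cgprojectRaw (N : Net) (T' : Finset ℕ) : Net :=
  let keptP := N.adjP T'
  { places := keptP
    transitions := T'
    flow := N.flow.filter fun e => (e.1 ∈ keptP ∧ e.2 ∈ T') ∨ (e.1 ∈ T' ∧ e.2 ∈ keptP)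
    label := N.label
    source := (N.entry T').sup id
    sink := (N.exit T').sup id }

/-- The choice-graph projection cgproject(N, T'). -/
def cgproject (N : Net) (T' : Finset ℕ) : Net :=
  let R := cgprojectRaw N T'
  Normalize R R.source R.sink

/-- The execution order order(N,G): i ⊏ j iff T_i◦ ∩ ◦T_j ≠ ∅.
(Also the edge relation of the execution flow flow(N,G).) -/
def execOrder (N : Net) {n : ℕ} (G : Fin n → Finset ℕ) (i j : Fin n) : Prop :=
  (N.exit (G i) ∩ N.entry (G j)).Nonempty

/-- Start edges of flow(N,G): parts whose entry points contain the source of N. -/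
def cgStart (N : Net) {n : ℕ} (G : Fin n → Finset ℕ) : Set (Fin n) :=
  { i | N.source ∈ N.entry (G i) }

/-- End edges of flow(N,G): parts whose exit points contain the sink of N. -/
def cgEnd (N : Net) {n : ℕ} (G : Fin n → Finset ℕ) : Set (Fin n) :=
  { i | N.sink ∈ N.exit (G i) }

/-! ### POWL 2.0 models -/

/-- POWL 2.0 models: labeled transitions, partial-order nodes, and
choice-graph nodes.  A choice graph over `Fin n` is represented by the set of
successors of the start node, the set of predecessors of the end node, and the
edge relation between the inner nodes. -/
inductive POWL : Type where
  | ptrans : Option ℕ → POWL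
  | po : (n : ℕ) → (Fin n → Fin n → Prop) → (Fin n → POWL) → POWL
  | cg : (n : ℕ) → Set (Fin n) → Set (Fin n) → (Fin n → Fin n → Prop) → (Fin n → POWL) → POWL

/-- `p` is a path of a choice graph: nonempty, it starts at a successor of the
start node, ends at a predecessor of the end node, and follows edges. -/
def CGPath {n : ℕ} (sE eE : Set (Fin n)) (ed : Fin n → Fin n → Prop) (p : List (Fin n)) : Prop :=
  ∃ h : p ≠ [], p.head h ∈ sE ∧ p.getLast h ∈ eE ∧ p.Chain' ed

/-- Validity of a choice graph: start is the unique node with no incoming edge,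
end is the unique node with no outgoing edge, and every node lies on a directed
path from start to end. -/
def IsChoiceGraph {n : ℕ} (sE eE : Set (Fin n)) (ed : Fin n → Fin n → Prop) : Prop :=
  sE.Nonempty ∧ eE.Nonempty ∧
  (∀ i, i ∈ sE ∨ ∃ j, ed j i) ∧
  (∀ i, i ∈ eE ∨ ∃ j, ed i j) ∧
  (∀ i, ∃ p, CGPath sE eE ed p ∧ i ∈ p)

/-- σ is an order-preserving shuffle of the sequences `f 0, …, f (n-1)` w.r.t. `rel`. -/
def IsShuffle {n : ℕ} (rel : Fin n → Fin n → Prop) (f : Fin n → List ℕ) (σ : List ℕ) : Prop :=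
  ∃ w : List (Fin n × ℕ),
    σ = w.map Prod.snd ∧
    (∀ i, (w.filter fun x => x.1 = i).map Prod.snd = f i) ∧
    ∀ a b : Fin w.length, rel (w.get a).1 (w.get b).1 → (a : ℕ) < (b : ℕ)

/-- Concatenation of a list of languages. -/
def ConcatLangs : List (Set (List ℕ)) → Set (List ℕ)
  | [] => {[]}
  | L :: Ls => { σ | ∃ u v, u ∈ L ∧ v ∈ ConcatLangs Ls ∧ σ = u ++ v }

/-- The language of a POWL 2.0 model. -/
def POWL.lang : POWL → Set (List ℕ)
  | .ptrans none => {[]}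
  | .ptrans (some a) => {[a]}
  | .po n rel ch => { σ | ∃ f : Fin n → List ℕ, (∀ i, f i ∈ (ch i).lang) ∧ IsShuffle rel f σ }
  | .cg n sE eE ed ch =>
      { σ | ∃ p, CGPath sE eE ed p ∧ σ ∈ ConcatLangs (p.map fun i => (ch i).lang) }

/-- Well-formedness of a POWL 2.0 model: partial-order nodes carry strict
partial orders over at least two children, choice-graph nodes carry valid
choice graphs over at least two children. -/
def POWL.WF : POWL → Prop
  | .ptrans _ => True
  | .po n rel ch => 2 ≤ n ∧ Irreflexive rel ∧ Transitive rel ∧ ∀ i, (ch i).WF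
  | .cg n sE eE ed ch => 2 ≤ n ∧ IsChoiceGraph sE eE ed ∧ ∀ i, (ch i).WF

/-! ### The conversion algorithm -/

/-- Transition-to-node reachability via the transitive closure of the flow. -/
def ttr (N : Net) (a b : ℕ) : Prop := Relation.TransGen (fun x y => (x, y) ∈ N.flow) a b

/-- The merge group of an XOR-split place p in popart. -/
def poSplitGroup (N : Net) (p : ℕ) : Finset ℕ :=
  N.transitions.filter fun t => ∃ t₁ ∈ N.post p, ∃ t₂ ∈ N.post p, ttr N t₁ t ∧ ¬ ttr N t₂ t

/-- The merge group of an XOR-join place p in popart. -/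
def poJoinGroup (N : Net) (p : ℕ) : Finset ℕ :=
  N.transitions.filter fun t => ∃ t₁ ∈ N.pre p, ∃ t₂ ∈ N.pre p, ttr N t t₁ ∧ ¬ ttr N t t₂

/-- Transitions related by some merge step of popart. -/
def popartRel (N : Net) (t t' : ℕ) : Prop :=
  ∃ p ∈ N.places,
    (1 < (N.post p).card ∧ t ∈ poSplitGroup N p ∧ t' ∈ poSplitGroup N p) ∨
    (1 < (N.pre p).card ∧ t ∈ poJoinGroup N p ∧ t' ∈ poJoinGroup N p)

/-- The part of popart(N) containing t: the equivalence class of t under the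
equivalence closure of all popart merge steps. -/
def popartClass (N : Net) (t : ℕ) : Finset ℕ :=
  N.transitions.filter fun t' => Relation.EqvGen (popartRel N) t t'

/-- `G` enumerates the partition popart(N). -/
def IsPopart (N : Net) {n : ℕ} (G : Fin n → Finset ℕ) : Prop :=
  (∀ i, ∃ t ∈ N.transitions, G i = popartClass N t) ∧
  (∀ t ∈ N.transitions, ∃ i, t ∈ G i) ∧
  Function.Injective G

/-- Forward restricted reachability: t is reachable from place p via a path avoiding t_stop. -/
def reachAvoid (N : Net) (tstop p t : ℕ) : Prop :=
  ∃ q, Relation.ReflTransGen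
        (fun a b => ∃ u, u ≠ tstop ∧ (a, u) ∈ N.flow ∧ (u, b) ∈ N.flow) p q ∧
    t ≠ tstop ∧ (q, t) ∈ N.flow

/-- Backward restricted reachability: place p is reachable from t via a path avoiding t_stop. -/
def backReachAvoid (N : Net) (tstop p t : ℕ) : Prop :=
  ∃ q, t ≠ tstop ∧ (t, q) ∈ N.flow ∧
    Relation.ReflTransGen
      (fun a b => ∃ u, u ≠ tstop ∧ (a, u) ∈ N.flow ∧ (u, b) ∈ N.flow) q p

/-- The merge group of an AND-split transition in cgpart. -/
def cgSplitGroup (N : Net) (ts : ℕ) : Finset ℕ :=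
  {ts} ∪ (N.transitions.filter fun t =>
    ∃ p₁ ∈ N.post ts, ∃ p₂ ∈ N.post ts, reachAvoid N ts p₁ t ∧ ¬ reachAvoid N ts p₂ t)

/-- The merge group of an AND-join transition in cgpart. -/
def cgJoinGroup (N : Net) (tj : ℕ) : Finset ℕ :=
  {tj} ∪ (N.transitions.filter fun t =>
    ∃ p₁ ∈ N.pre tj, ∃ p₂ ∈ N.pre tj, backReachAvoid N tj p₁ t ∧ ¬ backReachAvoid N tj p₂ t)

/-- Transitions related by some merge step of cgpart. -/
def cgpartRel (N : Net) (t t' : ℕ) : Prop :=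
  ∃ u ∈ N.transitions,
    (1 < (N.post u).card ∧ t ∈ cgSplitGroup N u ∧ t' ∈ cgSplitGroup N u) ∨
    (1 < (N.pre u).card ∧ t ∈ cgJoinGroup N u ∧ t' ∈ cgJoinGroup N u)

/-- The part of cgpart(N) containing t. -/
def cgpartClass (N : Net) (t : ℕ) : Finset ℕ :=
  N.transitions.filter fun t' => Relation.EqvGen (cgpartRel N) t t'

/-- `G` enumerates the partition cgpart(N). -/
def IsCgpart (N : Net) {n : ℕ} (G : Fin n → Finset ℕ) : Prop :=
  (∀ i, ∃ t ∈ N.transitions, G i = cgpartClass N t) ∧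
  (∀ t ∈ N.transitions, ∃ i, t ∈ G i) ∧
  Function.Injective G

/-- Isomorphism of labeled Petri nets. -/
def NetIso (N₁ N₂ : Net) : Prop :=
  ∃ fP fT : ℕ → ℕ,
    Set.BijOn fP ↑N₁.places ↑N₂.places ∧
    Set.BijOn fT ↑N₁.transitions ↑N₂.transitions ∧
    (∀ p ∈ N₁.places, ∀ t ∈ N₁.transitions,
      ((p, t) ∈ N₁.flow ↔ (fP p, fT t) ∈ N₂.flow) ∧
      ((t, p) ∈ N₁.flow ↔ (fT t, fP p) ∈ N₂.flow)) ∧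
    (∀ t ∈ N₁.transitions, N₁.label t = N₂.label (fT t))

/-- The partial-order decomposition step of the algorithm applies to N. -/
def PoStepApplies (N : Net) : Prop :=
  ∃ (n : ℕ) (G : Fin n → Finset ℕ),
    IsPopart N G ∧ 2 ≤ n ∧ ConflictHiding N G ∧ ∀ i, ¬ NetIso (poproject N (G i)) N

/-- `Converts N ψ`: the algorithm ConvertNetToPOWL converts the WF-net N into
the POWL model ψ without invoking the fall-through at any level of recursion. -/
inductive Converts : Net → POWL → Prop where
  | base (N : Net) (t : ℕ) :
      N.transitions = {t} → N.places = {N.source, N.sink} →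
      N.flow = {(N.source, t), (t, N.sink)} →
      Converts N (POWL.ptrans (N.label t))
  | poCase (N : Net) (n : ℕ) (G : Fin n → Finset ℕ) (ψ : Fin n → POWL) :
      IsPopart N G → 2 ≤ n → ConflictHiding N G →
      (∀ i, ¬ NetIso (poproject N (G i)) N) →
      (∀ i, Converts (poproject N (G i)) (ψ i)) →
      Converts N (POWL.po n (Relation.TransGen (execOrder N G)) ψ)
  | cgCase (N : Net) (n : ℕ) (G : Fin n → Finset ℕ) (ψ : Fin n → POWL) :
      ¬ PoStepApplies N →
      IsCgpart N G → 2 ≤ n → ConcurrencyHiding N G →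
      (∀ i, ¬ NetIso (cgproject N (G i)) N) →
      (∀ i, Converts (cgproject N (G i)) (ψ i)) →
      Converts N (POWL.cg n (cgStart N G) (cgEnd N G) (execOrder N G) ψ)

/-! ### Separable WF-nets -/

/-- The nets N and N' share no nodes. -/
def NodeDisjoint (N N' : Net) : Prop :=
  Disjoint (N.places ∪ N.transitions) (N'.places ∪ N'.transitions)

/-- The substitutive composition N_[t → N']. -/
def subst (N : Net) (t : ℕ) (N' : Net) : Net where
  places := N.places ∪ (N'.places \ {N'.source, N'.sink})
  transitions := (N.transitions \ {t}) ∪ N'.transitions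
  flow :=
    (N.flow.filter fun e => e.1 ≠ t ∧ e.2 ≠ t) ∪
    (N'.flow.filter fun e => e.1 ≠ N'.source ∧ e.2 ≠ N'.sink) ∪
    ((N.pre t) ×ˢ (N'.post N'.source)) ∪
    ((N'.pre N'.sink) ×ˢ (N.post t))
  label := fun x => if x ∈ N'.transitions then N'.label x else N.label x
  source := N.source
  sink := N.sink

/-- State machine: every transition has at most one input and one output place. -/
def IsStateMachine (N : Net) : Prop :=
  ∀ t ∈ N.transitions, (N.pre t).card ≤ 1 ∧ (N.post t).card ≤ 1

/-- Marked graph: every place has at most one input and one output transition. -/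
def IsMarkedGraph (N : Net) : Prop :=
  ∀ p ∈ N.places, (N.pre p).card ≤ 1 ∧ (N.post p).card ≤ 1

/-- The class of separable WF-nets. -/
inductive Separable : Net → Prop where
  | mg (N : Net) : N.IsWF → IsMarkedGraph N → Separable N
  | sm (N : Net) : N.IsWF → IsStateMachine N → Separable N
  | comp (N N' : Net) (t : ℕ) :
      Separable N → Separable N' → t ∈ N.transitions → NodeDisjoint N N' →
      Separable (subst N t N')

/-- Free-choice Petri net. -/
def FreeChoice (N : Net) : Prop :=
  ∀ t₁ ∈ N.transitions, ∀ t₂ ∈ N.transitions,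
    (N.pre t₁ ∩ N.pre t₂).Nonempty → N.pre t₁ = N.pre t₂

/-- A directed path in a Petri net: consecutive nodes are connected by the flow. -/
def DirPath (N : Net) (l : List ℕ) : Prop := l.Chain' fun a b => (a, b) ∈ N.flow

/-! The token that reaches the sink can never be consumed, since the sink feeds no transition.
So a firing sequence from `M` to `[sink]` also fires from `M - [sink]` to the empty marking.
But every transition of a WF-net has an output place, so the empty marking is reachable only from
itself, hence `M - [sink] = 0` and `M = [sink]`. -/

namespace Net

variable {N : Net}

theorem mem_pre_iff {p x : ℕ} : p ∈ N.pre x ↔ (p, x) ∈ N.flow := by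
  simp [pre]

theorem mem_post_iff {x y : ℕ} : y ∈ N.post x ↔ (x, y) ∈ N.flow := by
  simp [post]

theorem IsWF.post_sink (hWF : N.IsWF) : N.post N.sink = ∅ :=
  (hWF.2.2.2.2.1 N.sink hWF.2.2.1).mpr rfl

theorem IsWF.sink_notMem_pre (hWF : N.IsWF) (t : ℕ) : N.sink ∉ N.pre t := by
  rw [mem_pre_iff, ← mem_post_iff, hWF.post_sink]
  exact Finset.notMem_empty t

theorem IsWF.finalM_eq_zero_of_mem_pre (hWF : N.IsWF) (t : ℕ) :
    ∀ p ∈ N.pre t, N.finalM p = 0 := by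
  intro p hp
  have hne : p ≠ N.sink := fun h => hWF.sink_notMem_pre t (h ▸ hp)
  simp [finalM, hne]

theorem IsWF.post_nonempty (hWF : N.IsWF) {t : ℕ} (ht : t ∈ N.transitions) :
    (N.post t).Nonempty := by
  have hne : t ≠ N.sink := fun h =>
    Finset.disjoint_right.mp hWF.1.1 ht (h ▸ hWF.2.2.1)
  rcases (hWF.2.2.2.2.2 t (Finset.mem_union_right _ ht)).2.cases_head with h | ⟨q, hq, -⟩
  · exact absurd h hne
  · exact ⟨q, mem_post_iff.mpr hq⟩

theorem finalM_le_iff {M : Marking} : N.finalM ≤ M ↔ 1 ≤ M N.sink := by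
  refine ⟨fun h => by simpa [finalM] using h N.sink, fun h p => ?_⟩
  by_cases hp : p = N.sink
  · simpa [finalM, hp] using h
  · simp [finalM, hp]

theorem fire.ne_zero {t : ℕ} {M M' : Marking} (hpost : (N.post t).Nonempty)
    (h : N.fire t M M') : M' ≠ 0 := by
  rintro rfl
  obtain ⟨q, hq⟩ := hpost
  have hbal := h.2 q
  have henabled := h.1.2 q
  split_ifs at hbal <;> simp_all

theorem eq_zero_of_firingSeq_zero (hpost : ∀ t ∈ N.transitions, (N.post t).Nonempty)
    {σ : List ℕ} {M : Marking} (h : N.firingSeq M σ 0) : M = 0 := by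
  induction σ generalizing M with
  | nil => exact h.symm
  | cons t σ ih =>
    obtain ⟨M₁, hfire, hrest⟩ := h
    exact absurd (ih hrest) (hfire.ne_zero (hpost t hfire.1.1))

theorem fire.tsub {t : ℕ} {M M' K : Marking} (hK : ∀ p ∈ N.pre t, K p = 0) (hKM : K ≤ M)
    (h : N.fire t M M') : N.fire t (M - K) (M' - K) ∧ K ≤ M' := by
  obtain ⟨⟨ht, henabled⟩, hbal⟩ := h
  have hKM' : K ≤ M' := fun p => show K p ≤ M' p by
    have hbal_p := hbal p
    have hKM_p : K p ≤ M p := hKM p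
    by_cases hp : p ∈ N.pre t
    · simp [hK p hp]
    · rw [if_neg hp] at hbal_p
      split_ifs at hbal_p <;> omega
  refine ⟨⟨⟨ht, fun p hp => ?_⟩, fun p => ?_⟩, hKM'⟩
  · simpa [hK p hp] using henabled p hp
  · have hbal_p := hbal p
    have hKM_p : K p ≤ M p := hKM p
    have hKM'_p : K p ≤ M' p := hKM' p
    rw [Pi.sub_apply, Pi.sub_apply]
    split_ifs at hbal_p ⊢ <;> omega

theorem firingSeq_tsub {K : Marking} (hK : ∀ t, ∀ p ∈ N.pre t, K p = 0) {σ : List ℕ}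
    {M M' : Marking} (hKM : K ≤ M) (h : N.firingSeq M σ M') :
    N.firingSeq (M - K) σ (M' - K) := by
  induction σ generalizing M with
  | nil => exact congrArg (· - K) h
  | cons t σ ih =>
    obtain ⟨M₁, hfire, hrest⟩ := h
    obtain ⟨hfire', hKM₁⟩ := hfire.tsub (hK t) hKM
    exact ⟨M₁ - K, hfire', ih hKM₁ hrest⟩

end Net

/-- In a WF-net, the option to complete implies proper
completion: if from every marking reachable from [source] the marking [sink]
is reachable, then [sink] is the only marking reachable from [source] that
contains at least one token in the sink place. -/
theorem option_to_complete_implies_proper_completion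
    (N : Net) (hWF : N.IsWF)
    (hoption : ∀ M, N.reachable N.initM M → N.reachable M N.finalM) :
    ∀ M, N.reachable N.initM M → 1 ≤ M N.sink → M = N.finalM := by
  intro M hM hsink
  obtain ⟨σ, hσ⟩ := hoption M hM
  have hle : N.finalM ≤ M := Net.finalM_le_iff.mpr hsink
  have hzero : N.firingSeq (M - N.finalM) σ 0 := by
    simpa using Net.firingSeq_tsub hWF.finalM_eq_zero_of_mem_pre hle hσ
  have hM_le : M ≤ N.finalM :=
    tsub_eq_zero_iff_le.mp (Net.eq_zero_of_firingSeq_zero (fun _ => hWF.post_nonempty) hzero)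
  exact le_antisymm hM_le hle

end
end

section
/- Let N = (P,T,F) be a safe and sound WF-net and let G = {T_1,…,T_n} be a concurrency-hiding partition of T. Then for every i with 1 ≤ i ≤ n, the choice graph projection cgproject(N,T_i) is a safe and sound WF-net. -/
/-!
Common formalization of Petri nets, workflow nets (WF-nets), POWL 2.0 models,
and the WF-net-to-POWL conversion algorithm.
-/

noncomputable section
attribute [local instance] Classical.propDecidable

/-!
Let `R = cgprojectRaw N T` for a part `T` with single entry `ps` and single exit `pe`. Started with
a token on `ps`, `R` behaves like `T` inside `N`. Outside transitions touch the places of `T` only at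
`ps` and `pe`, so every reachable marking of `N` carries a local marking of `T` that is reachable in
`R` or empty; when the outside feeds `ps`, replaying the local run on top of the new token and using
safety of `N` shows that the part is idle. Conversely, once `N` has put a token on `ps`, every run of
`R` can be replayed inside `N`. Hence safety, absence of dead transitions, the option to complete
and proper completion pass from `N` to `R` (the last one because in a sound net no reachable
marking covers another), and the path condition follows from them. Normalization adds a fresh
source and sink and preserves all of this.
-/

/-! ### Firing, reachability and soundness -/

namespace Net

variable {N N' : Net} {M M' M₀ D : Marking} {σ : List ℕ} {a x t p q : ℕ}

theorem mem_pre : a ∈ N.pre x ↔ (a, x) ∈ N.flow := by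
  simp [Net.pre]

theorem mem_post : a ∈ N.post x ↔ (x, a) ∈ N.flow := by
  simp [Net.post]

theorem mem_adjP {T : Finset ℕ} :
    q ∈ N.adjP T ↔ q ∈ N.places ∧ ((N.pre q ∪ N.post q) ∩ T).Nonempty :=
  Finset.mem_filter

theorem fire_eq_of_notMem (h : N.fire t M M') (hpre : p ∉ N.pre t) (hpost : p ∉ N.post t) :
    M' p = M p := by
  simpa [hpre, hpost] using h.2 p

theorem one_le_of_fire_of_mem_post (h : N.fire t M M') (hp : p ∈ N.post t) : 1 ≤ M' p := by
  have := h.2 p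
  simp only [hp, if_true] at this
  split_ifs at this with hpre
  · have := h.1.2 p hpre; omega
  · omega

theorem fire_unique {M₁ M₂ : Marking} (h₁ : N.fire t M M₁) (h₂ : N.fire t M M₂) : M₁ = M₂ := by
  funext p
  have := h₁.2 p
  have := h₂.2 p
  omega

theorem exists_fire (h : N.enabled t M) : ∃ M', N.fire t M M' := by
  refine ⟨fun p => M p + (if p ∈ N.post t then 1 else 0) - (if p ∈ N.pre t then 1 else 0),
    h, fun p => ?_⟩
  have := h.2 p
  split_ifs <;> simp_all

theorem fire_add (h : N.fire t M M') (D : Marking) : N.fire t (M + D) (M' + D) :=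
  ⟨⟨h.1.1, fun p hp => (h.1.2 p hp).trans (Nat.le_add_right _ _)⟩,
    fun p => by have := h.2 p; simp only [Pi.add_apply]; omega⟩

theorem fire_congr (ht : t ∈ N'.transitions) (hpre : N'.pre t = N.pre t)
    (hpost : N'.post t = N.post t) (h : N.fire t M M') : N'.fire t M M' :=
  ⟨⟨ht, hpre ▸ h.1.2⟩, hpre ▸ hpost ▸ h.2⟩

theorem firingSeq_nil : N.firingSeq M [] M' ↔ M' = M := Iff.rfl

theorem firingSeq_cons : N.firingSeq M (t :: σ) M' ↔ ∃ M₁, N.fire t M M₁ ∧ N.firingSeq M₁ σ M' :=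
  Iff.rfl

theorem firingSeq_append {σ τ : List ℕ} :
    N.firingSeq M (σ ++ τ) M' ↔ ∃ M₁, N.firingSeq M σ M₁ ∧ N.firingSeq M₁ τ M' := by
  induction σ generalizing M with
  | nil => simp [firingSeq_nil]
  | cons t σ ih =>
    simp only [List.cons_append, firingSeq_cons, ih]
    exact ⟨fun ⟨M₂, hf, M₁, h₁, h₂⟩ => ⟨M₁, ⟨M₂, hf, h₁⟩, h₂⟩,
      fun ⟨M₁, ⟨M₂, hf, h₁⟩, h₂⟩ => ⟨M₂, hf, M₁, h₁, h₂⟩⟩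

theorem firingSeq_add (h : N.firingSeq M σ M') (D : Marking) :
    N.firingSeq (M + D) σ (M' + D) := by
  induction σ generalizing M with
  | nil => rw [firingSeq_nil.1 h]; rfl
  | cons t σ ih =>
    obtain ⟨M₁, hf, hσ⟩ := h
    exact ⟨M₁ + D, fire_add hf D, ih hσ⟩

theorem firingSeq_congr
    (h : ∀ t ∈ N.transitions, t ∈ N'.transitions ∧ N'.pre t = N.pre t ∧ N'.post t = N.post t)
    (hσ : N.firingSeq M σ M') : N'.firingSeq M σ M' := by
  induction σ generalizing M with
  | nil => exact hσ
  | cons t σ ih =>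
    obtain ⟨M₁, hf, hσ⟩ := hσ
    obtain ⟨ht, hpre, hpost⟩ := h t hf.1.1
    exact ⟨M₁, fire_congr ht hpre hpost hf, ih hσ⟩

theorem reachable_refl (M : Marking) : N.reachable M M := ⟨[], rfl⟩

theorem reachable_trans (h₁ : N.reachable M M₀) (h₂ : N.reachable M₀ M') : N.reachable M M' :=
  let ⟨σ, hσ⟩ := h₁
  let ⟨τ, hτ⟩ := h₂
  ⟨σ ++ τ, firingSeq_append.2 ⟨M₀, hσ, hτ⟩⟩

theorem fire.reachable (h : N.fire t M M') : N.reachable M M' := ⟨[t], M', h, rfl⟩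

theorem reachable.fire (h : N.reachable M₀ M) (hf : N.fire t M M') : N.reachable M₀ M' :=
  reachable_trans h hf.reachable

theorem reachable_add (h : N.reachable M M') (D : Marking) : N.reachable (M + D) (M' + D) :=
  let ⟨σ, hσ⟩ := h
  ⟨σ, firingSeq_add hσ D⟩

theorem reachable_congr
    (h : ∀ t ∈ N.transitions, t ∈ N'.transitions ∧ N'.pre t = N.pre t ∧ N'.post t = N.post t)
    (hr : N.reachable M M') : N'.reachable M M' :=
  let ⟨σ, hσ⟩ := hr
  ⟨σ, firingSeq_congr h hσ⟩

@[elab_as_elim]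
theorem reachable_induction {P : Marking → Prop} (h : N.reachable M₀ M) (h₀ : P M₀)
    (hstep : ∀ M t M', N.reachable M₀ M → P M → N.fire t M M' → P M') : P M := by
  obtain ⟨σ, hσ⟩ := h
  suffices ∀ M₁, N.reachable M₀ M₁ → P M₁ → N.firingSeq M₁ σ M → P M from
    this M₀ (reachable_refl M₀) h₀ hσ
  clear hσ
  induction σ with
  | nil => intro M₁ _ h₁ hσ; rwa [firingSeq_nil.1 hσ]
  | cons t σ ih =>
    rintro M₁ hr h₁ ⟨M₂, hf, hσ⟩
    exact ih M₂ (hr.fire hf) (hstep M₁ t M₂ hr h₁ hf) hσ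

/-- Completing `M` inside `M + D` marks the sink together with `D`. -/
theorem Sound.eq_zero_of_reachable_add (hsound : N.Sound) (h : N.reachable N.initM M)
    (hD : N.reachable N.initM (M + D)) : D = 0 := by
  have hfin := hsound.2.2 _ (reachable_trans hD (reachable_add (hsound.2.1 M h) D))
    (by simp [finalM])
  funext q
  have := congrFun hfin q
  simp only [Pi.add_apply] at this
  simp only [Pi.zero_apply]
  omega

theorem IsPetri.mem_places_of_mem_pre (hN : N.IsPetri) (ht : t ∈ N.transitions)
    (hp : p ∈ N.pre t) : p ∈ N.places := by
  rcases hN.2 _ (mem_pre.1 hp) with h | h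
  · exact h.1
  · exact absurd ht (Finset.disjoint_left.1 hN.1 h.2)

theorem IsPetri.mem_places_of_mem_post (hN : N.IsPetri) (ht : t ∈ N.transitions)
    (hp : p ∈ N.post t) : p ∈ N.places := by
  rcases hN.2 _ (mem_post.1 hp) with h | h
  · exact absurd ht (Finset.disjoint_left.1 hN.1 h.1)
  · exact h.2

theorem IsPetri.mem_transitions_of_mem_pre (hN : N.IsPetri) (hp : p ∈ N.places)
    (ht : t ∈ N.pre p) : t ∈ N.transitions := by
  rcases hN.2 _ (mem_pre.1 ht) with h | h
  · exact absurd h.2 (Finset.disjoint_left.1 hN.1 hp)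
  · exact h.1

theorem IsPetri.mem_transitions_of_mem_post (hN : N.IsPetri) (hp : p ∈ N.places)
    (ht : t ∈ N.post p) : t ∈ N.transitions := by
  rcases hN.2 _ (mem_post.1 ht) with h | h
  · exact h.2
  · exact absurd h.1 (Finset.disjoint_left.1 hN.1 hp)

theorem pathRel_source_of_reachable (hpre : ∀ t ∈ N.transitions, (N.pre t).Nonempty)
    (h : N.reachable N.initM M) (hq : 1 ≤ M q) : N.pathRel N.source q := by
  refine reachable_induction (P := fun M => ∀ q, 1 ≤ M q → N.pathRel N.source q) h ?_ ?_ q hq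
  · intro q hq
    have : q = N.source := by by_contra hne; simp [initM, hne] at hq
    exact this ▸ Relation.ReflTransGen.refl
  · intro M t M' _ ih hf q hq
    by_cases hqt : q ∈ N.post t
    · obtain ⟨p, hp⟩ := hpre t hf.1.1
      exact ((ih p (hf.1.2 p hp)).tail (mem_pre.1 hp)).tail (mem_post.1 hqt)
    · refine ih q ?_
      have := hf.2 q
      simp only [hqt, if_false] at this
      omega

theorem pathRel_sink_of_firingSeq (hpost : ∀ t ∈ N.transitions, (N.post t).Nonempty)
    (h : N.firingSeq M σ N.finalM) (hq : 1 ≤ M q) : N.pathRel q N.sink := by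
  induction σ generalizing M q with
  | nil =>
    have : q = N.sink := by by_contra hne; simp [← firingSeq_nil.1 h, finalM, hne] at hq
    exact this ▸ Relation.ReflTransGen.refl
  | cons t σ ih =>
    obtain ⟨M₁, hf, hσ⟩ := h
    by_cases hqt : q ∈ N.pre t
    · obtain ⟨p, hp⟩ := hpost t hf.1.1
      exact .head (mem_pre.1 hqt) (.head (mem_post.1 hp)
        (ih hσ (one_le_of_fire_of_mem_post hf hp)))
    · refine ih hσ ?_
      have := hf.2 q
      simp only [hqt, if_false] at this
      omega

theorem Sound.exists_reachable_marked (hsound : N.Sound) (ht : t ∈ N.transitions)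
    (hq : q ∈ N.pre t ∪ N.post t) : ∃ M, N.reachable N.initM M ∧ 1 ≤ M q := by
  obtain ⟨M, hM, hen⟩ := hsound.1 t ht
  rcases Finset.mem_union.1 hq with hq | hq
  · exact ⟨M, hM, hen.2 q hq⟩
  · obtain ⟨M', hf⟩ := exists_fire hen
    exact ⟨M', hM.fire hf, one_le_of_fire_of_mem_post hf hq⟩

/-- Every place next to a transition is marked at some reachable marking, and tokens travel only
along the flow. -/
theorem Sound.pathRel (hsound : N.Sound) (hpre : ∀ t ∈ N.transitions, (N.pre t).Nonempty)
    (hpost : ∀ t ∈ N.transitions, (N.post t).Nonempty)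
    (hadj : ∀ p ∈ N.places, ∃ t ∈ N.transitions, p ∈ N.pre t ∪ N.post t) :
    ∀ x ∈ N.places ∪ N.transitions, N.pathRel N.source x ∧ N.pathRel x N.sink := by
  have hmarked : ∀ t ∈ N.transitions, ∀ q ∈ N.pre t ∪ N.post t,
      N.pathRel N.source q ∧ N.pathRel q N.sink := by
    intro t ht q hq
    obtain ⟨M, hM, hMq⟩ := hsound.exists_reachable_marked ht hq
    obtain ⟨σ, hσ⟩ := hsound.2.1 M hM
    exact ⟨pathRel_source_of_reachable hpre hM hMq, pathRel_sink_of_firingSeq hpost hσ hMq⟩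
  intro x hx
  rcases Finset.mem_union.1 hx with hx | hx
  · obtain ⟨t, ht, hxt⟩ := hadj x hx
    exact hmarked t ht x hxt
  · obtain ⟨p, hp⟩ := hpre x hx
    obtain ⟨p', hp'⟩ := hpost x hx
    exact ⟨(hmarked x hx p (Finset.mem_union_left _ hp)).1.tail (mem_pre.1 hp),
      .head (mem_post.1 hp') (hmarked x hx p' (Finset.mem_union_right _ hp')).2⟩

theorem reachable_apply_eq_zero (hp : N.pre p = ∅) (h : N.reachable M₀ M) (h₀ : M₀ p = 0) :
    M p = 0 := by
  refine reachable_induction h h₀ fun M t M' _ ih hf => ?_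
  have hpost : p ∉ N.post t := fun h => by simpa [hp] using mem_pre.2 (mem_post.1 h)
  have := hf.2 p
  simp only [hpost, if_false] at this
  omega

theorem reachable_apply_eq_zero_of_notMem_places (hN : N.IsPetri)
    (hs : N.source ∈ N.places) (h : N.reachable N.initM M) (hq : q ∉ N.places) : M q = 0 := by
  refine reachable_induction h ?_ fun M t M' _ ih hf => ?_
  · simp [initM, show q ≠ N.source from fun h => hq (h ▸ hs)]
  · have hpost : q ∉ N.post t := fun h => hq (hN.mem_places_of_mem_post hf.1.1 h)
    have := hf.2 q
    simp only [hpost, if_false] at this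
    omega

theorem exists_marked_of_reachable (hpost : ∀ t ∈ N.transitions, (N.post t).Nonempty)
    (h : N.reachable M₀ M) (h₀ : ∃ q, 1 ≤ M₀ q) : ∃ q, 1 ≤ M q := by
  refine reachable_induction h h₀ fun M t M' _ _ hf => ?_
  obtain ⟨p, hp⟩ := hpost t hf.1.1
  exact ⟨p, one_le_of_fire_of_mem_post hf hp⟩

/-- When nothing produces the source, the first firing empties it for good. -/
theorem eq_initM_of_reachable (hsrc : N.pre N.source = ∅)
    (hpre : ∀ t ∈ N.transitions, (N.pre t).Nonempty) (h : N.reachable N.initM M)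
    (hM : 1 ≤ M N.source) : M = N.initM := by
  suffices M = N.initM ∨ M N.source = 0 from this.resolve_right (by omega)
  refine reachable_induction h (Or.inl rfl) fun M t M' _ ih hf => ?_
  have hpost : N.source ∉ N.post t := fun h => by simpa [hsrc] using mem_pre.2 (mem_post.1 h)
  have hbal := hf.2 N.source
  simp only [hpost, if_false] at hbal
  right
  rcases ih with rfl | h0
  · obtain ⟨p, hp⟩ := hpre t hf.1.1
    have hps : p = N.source := by
      by_contra hne; simpa [initM, hne] using hf.1.2 p hp
    subst hps
    simpa [hp, initM] using hbal
  · split_ifs at hbal <;> omega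

/-! ### Open WF-nets -/

/-- The conditions of a WF-net, except that the source may have input transitions and the sink
output transitions. -/
structure IsOpenWF (N : Net) : Prop where
  isPetri : N.IsPetri
  source_mem : N.source ∈ N.places
  sink_mem : N.sink ∈ N.places
  pre_nonempty : ∀ p ∈ N.places, p ≠ N.source → (N.pre p).Nonempty
  post_nonempty : ∀ p ∈ N.places, p ≠ N.sink → (N.post p).Nonempty
  pathRel : ∀ x ∈ N.places ∪ N.transitions, N.pathRel N.source x ∧ N.pathRel x N.sink

theorem IsWF.isOpenWF (hN : N.IsWF) : N.IsOpenWF where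
  isPetri := hN.1
  source_mem := hN.2.1
  sink_mem := hN.2.2.1
  pre_nonempty p hp hps := Finset.nonempty_iff_ne_empty.2 fun h => hps ((hN.2.2.2.1 p hp).1 h)
  post_nonempty p hp hps := Finset.nonempty_iff_ne_empty.2 fun h => hps ((hN.2.2.2.2.1 p hp).1 h)
  pathRel := hN.2.2.2.2.2

theorem IsOpenWF.isWF (hN : N.IsOpenWF) (hs : N.pre N.source = ∅) (he : N.post N.sink = ∅) :
    N.IsWF :=
  ⟨hN.isPetri, hN.source_mem, hN.sink_mem,
    fun p hp => ⟨fun h => by_contra fun hne => (hN.pre_nonempty p hp hne).ne_empty h,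
      fun h => h ▸ hs⟩,
    fun p hp => ⟨fun h => by_contra fun hne => (hN.post_nonempty p hp hne).ne_empty h,
      fun h => h ▸ he⟩,
    hN.pathRel⟩

theorem IsOpenWF.pre_nonempty_of_mem_transitions (hN : N.IsOpenWF) (ht : t ∈ N.transitions) :
    (N.pre t).Nonempty := by
  rcases (hN.pathRel t (Finset.mem_union_right _ ht)).1.cases_tail with h | ⟨p, _, hp⟩
  · exact absurd (h ▸ hN.source_mem) (Finset.disjoint_right.1 hN.isPetri.1 ht)
  · exact ⟨p, mem_pre.2 hp⟩

theorem IsOpenWF.post_nonempty_of_mem_transitions (hN : N.IsOpenWF) (ht : t ∈ N.transitions) :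
    (N.post t).Nonempty := by
  rcases (hN.pathRel t (Finset.mem_union_right _ ht)).2.cases_head with h | ⟨p, hp, _⟩
  · exact absurd (h ▸ hN.sink_mem) (Finset.disjoint_right.1 hN.isPetri.1 ht)
  · exact ⟨p, mem_post.2 hp⟩

/-! ### Normalization -/

theorem lt_freshBase (hx : x ∈ N.places ∪ N.transitions) : x < N.freshBase :=
  Nat.lt_succ_of_le (Finset.le_sup (f := id) (Finset.mem_union_left _ hx))

theorem source_lt_freshBase : N.source < N.freshBase :=
  Nat.lt_succ_of_le (Finset.le_sup (f := id) (by simp))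

theorem sink_lt_freshBase : N.sink < N.freshBase :=
  Nat.lt_succ_of_le (Finset.le_sup (f := id) (by simp))

theorem IsPetri.lt_freshBase_of_mem_flow (hN : N.IsPetri) {e : ℕ × ℕ} (he : e ∈ N.flow) :
    e.1 < N.freshBase ∧ e.2 < N.freshBase := by
  rcases hN.2 e he with ⟨h₁, h₂⟩ | ⟨h₁, h₂⟩ <;>
    exact ⟨lt_freshBase (by simp [h₁]), lt_freshBase (by simp [h₂])⟩

theorem IsOpenWF.not_enabled (hN : N.IsOpenWF) (ht : t ∈ N.transitions)
    (hM : ∀ p < N.freshBase, M p = 0) : ¬N.enabled t M := fun hen => by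
  obtain ⟨p, hp⟩ := hN.pre_nonempty_of_mem_transitions ht
  have := hen.2 p hp
  have := hM p (lt_freshBase (Finset.mem_union_left _ (hN.isPetri.mem_places_of_mem_pre ht hp)))
  omega

end Net

open Net

namespace Normalize

variable {R : Net} {a x t : ℕ} {M : Marking}

theorem mem_flow {e : ℕ × ℕ} : e ∈ (Normalize R R.source R.sink).flow ↔ e ∈ R.flow ∨
    ((R.pre R.source).Nonempty ∧
      (e = (R.freshBase, R.freshBase + 1) ∨ e = (R.freshBase + 1, R.source))) ∨
    ((R.post R.sink).Nonempty ∧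
      (e = (R.sink, R.freshBase + 3) ∨ e = (R.freshBase + 3, R.freshBase + 2))) := by
  simp only [Normalize]
  split_ifs <;> simp_all <;> tauto

theorem mem_pre : a ∈ (Normalize R R.source R.sink).pre x ↔ (a, x) ∈ R.flow ∨
    ((R.pre R.source).Nonempty ∧
      (a = R.freshBase ∧ x = R.freshBase + 1 ∨ a = R.freshBase + 1 ∧ x = R.source)) ∨
    ((R.post R.sink).Nonempty ∧
      (a = R.sink ∧ x = R.freshBase + 3 ∨ a = R.freshBase + 3 ∧ x = R.freshBase + 2)) := by
  simp [Net.mem_pre, mem_flow]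

theorem mem_post : a ∈ (Normalize R R.source R.sink).post x ↔ (x, a) ∈ R.flow ∨
    ((R.pre R.source).Nonempty ∧
      (x = R.freshBase ∧ a = R.freshBase + 1 ∨ x = R.freshBase + 1 ∧ a = R.source)) ∨
    ((R.post R.sink).Nonempty ∧
      (x = R.sink ∧ a = R.freshBase + 3 ∨ x = R.freshBase + 3 ∧ a = R.freshBase + 2)) := by
  simp [Net.mem_post, mem_flow]

theorem mem_places : x ∈ (Normalize R R.source R.sink).places ↔ x ∈ R.places ∨
    ((R.pre R.source).Nonempty ∧ x = R.freshBase) ∨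
    ((R.post R.sink).Nonempty ∧ x = R.freshBase + 2) := by
  simp only [Normalize]
  split_ifs <;> simp_all <;> tauto

theorem mem_transitions : x ∈ (Normalize R R.source R.sink).transitions ↔ x ∈ R.transitions ∨
    ((R.pre R.source).Nonempty ∧ x = R.freshBase + 1) ∨
    ((R.post R.sink).Nonempty ∧ x = R.freshBase + 3) := by
  simp only [Normalize]
  split_ifs <;> simp_all <;> tauto

theorem source_eq : (Normalize R R.source R.sink).source =
    if (R.pre R.source).Nonempty then R.freshBase else R.source := rfl

theorem sink_eq : (Normalize R R.source R.sink).sink =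
    if (R.post R.sink).Nonempty then R.freshBase + 2 else R.sink := rfl

theorem pre_of_mem_transitions (hR : R.IsOpenWF) (ht : t ∈ R.transitions) :
    (Normalize R R.source R.sink).pre t = R.pre t := by
  have := lt_freshBase (Finset.mem_union_right _ ht)
  have hts : t ≠ R.source := fun h => Finset.disjoint_left.1 hR.isPetri.1 hR.source_mem (h ▸ ht)
  ext a
  rw [mem_pre, Net.mem_pre]
  refine ⟨?_, Or.inl⟩
  rintro (h | ⟨-, h⟩ | ⟨-, h⟩)
  exacts [h, by omega, by omega]

theorem post_of_mem_transitions (hR : R.IsOpenWF) (ht : t ∈ R.transitions) :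
    (Normalize R R.source R.sink).post t = R.post t := by
  have := lt_freshBase (Finset.mem_union_right _ ht)
  have hts : t ≠ R.sink := fun h => Finset.disjoint_left.1 hR.isPetri.1 hR.sink_mem (h ▸ ht)
  ext a
  rw [mem_post, Net.mem_post]
  refine ⟨?_, Or.inl⟩
  rintro (h | ⟨-, h⟩ | ⟨-, h⟩)
  exacts [h, by omega, by omega]

theorem pre_freshBase_add_one (hR : R.IsPetri) (hS : (R.pre R.source).Nonempty) :
    (Normalize R R.source R.sink).pre (R.freshBase + 1) = {R.freshBase} := by
  ext a
  have hflow : (a, R.freshBase + 1) ∉ R.flow := fun h => by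
    have := (hR.lt_freshBase_of_mem_flow h).2; omega
  have := R.source_lt_freshBase
  rw [mem_pre]
  simp [hflow, hS]
  omega

theorem post_freshBase_add_one (hR : R.IsPetri) (hS : (R.pre R.source).Nonempty) :
    (Normalize R R.source R.sink).post (R.freshBase + 1) = {R.source} := by
  ext a
  have hflow : (R.freshBase + 1, a) ∉ R.flow := fun h => by
    have := (hR.lt_freshBase_of_mem_flow h).1; omega
  have := R.sink_lt_freshBase
  rw [mem_post]
  simp [hflow, hS]
  omega

theorem pre_freshBase_add_three (hR : R.IsPetri) (hE : (R.post R.sink).Nonempty) :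
    (Normalize R R.source R.sink).pre (R.freshBase + 3) = {R.sink} := by
  ext a
  have hflow : (a, R.freshBase + 3) ∉ R.flow := fun h => by
    have := (hR.lt_freshBase_of_mem_flow h).2; omega
  have := R.source_lt_freshBase
  rw [mem_pre]
  simp [hflow, hE]
  omega

theorem post_freshBase_add_three (hR : R.IsPetri) (hE : (R.post R.sink).Nonempty) :
    (Normalize R R.source R.sink).post (R.freshBase + 3) = {R.freshBase + 2} := by
  ext a
  have hflow : (R.freshBase + 3, a) ∉ R.flow := fun h => by
    have := (hR.lt_freshBase_of_mem_flow h).1; omega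
  have := R.sink_lt_freshBase
  rw [mem_post]
  simp [hflow, hE]
  omega

theorem fire_freshBase_add_one (hR : R.IsPetri) (hS : (R.pre R.source).Nonempty) :
    (Normalize R R.source R.sink).fire (R.freshBase + 1)
      (Normalize R R.source R.sink).initM R.initM := by
  have := R.source_lt_freshBase
  refine ⟨⟨mem_transitions.2 (Or.inr (Or.inl ⟨hS, rfl⟩)), ?_⟩, fun p => ?_⟩
  · simp [pre_freshBase_add_one hR hS, initM, source_eq, hS]
  · simp only [pre_freshBase_add_one hR hS, post_freshBase_add_one hR hS, initM, source_eq,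
      if_pos hS, Finset.mem_singleton]
    split_ifs <;> omega

theorem fire_freshBase_add_three (hR : R.IsPetri) (hE : (R.post R.sink).Nonempty) :
    (Normalize R R.source R.sink).fire (R.freshBase + 3)
      R.finalM (Normalize R R.source R.sink).finalM := by
  have := R.sink_lt_freshBase
  refine ⟨⟨mem_transitions.2 (Or.inr (Or.inr ⟨hE, rfl⟩)), ?_⟩, fun p => ?_⟩
  · simp [pre_freshBase_add_three hR hE, finalM]
  · simp only [pre_freshBase_add_three hR hE, post_freshBase_add_three hR hE, finalM, sink_eq,
      if_pos hE, Finset.mem_singleton]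
    split_ifs <;> omega

theorem initM_eq (hS : ¬(R.pre R.source).Nonempty) :
    (Normalize R R.source R.sink).initM = R.initM := by
  funext p; simp [initM, source_eq, hS]

theorem finalM_eq (hE : ¬(R.post R.sink).Nonempty) :
    (Normalize R R.source R.sink).finalM = R.finalM := by
  funext p; simp [finalM, sink_eq, hE]

theorem reachable_initM (hR : R.IsOpenWF) :
    (Normalize R R.source R.sink).reachable (Normalize R R.source R.sink).initM R.initM := by
  by_cases hS : (R.pre R.source).Nonempty
  · exact (fire_freshBase_add_one hR.isPetri hS).reachable
  · exact initM_eq hS ▸ reachable_refl _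

theorem reachable_finalM (hR : R.IsOpenWF) :
    (Normalize R R.source R.sink).reachable R.finalM (Normalize R R.source R.sink).finalM := by
  by_cases hE : (R.post R.sink).Nonempty
  · exact (fire_freshBase_add_three hR.isPetri hE).reachable
  · exact finalM_eq hE ▸ reachable_refl _

theorem reachable_of_reachable (hR : R.IsOpenWF) {M M' : Marking} (h : R.reachable M M') :
    (Normalize R R.source R.sink).reachable M M' :=
  reachable_congr (fun _ ht => ⟨mem_transitions.2 (Or.inl ht), pre_of_mem_transitions hR ht,
    post_of_mem_transitions hR ht⟩) h

theorem reachable_cases (hR : R.IsOpenWF) (hsound : R.Sound)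
    (h : (Normalize R R.source R.sink).reachable (Normalize R R.source R.sink).initM M) :
    R.reachable R.initM M ∨
      ((R.pre R.source).Nonempty ∧ M = (Normalize R R.source R.sink).initM) ∨
      ((R.post R.sink).Nonempty ∧ M = (Normalize R R.source R.sink).finalM) := by
  have hb := R.source_lt_freshBase
  have he := R.sink_lt_freshBase
  refine reachable_induction h ?_ fun M t M' _ ih hf => ?_
  · by_cases hS : (R.pre R.source).Nonempty
    · exact Or.inr (Or.inl ⟨hS, rfl⟩)
    · exact Or.inl (initM_eq hS ▸ reachable_refl _)
  rcases mem_transitions.1 hf.1.1 with ht | ⟨hS, rfl⟩ | ⟨hE, rfl⟩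
  · have hf' : R.fire t M M' :=
      fire_congr ht (pre_of_mem_transitions hR ht).symm (post_of_mem_transitions hR ht).symm hf
    rcases ih with hM | ⟨hS, rfl⟩ | ⟨hE, rfl⟩
    · exact Or.inl (hM.fire hf')
    · refine absurd hf'.1 (hR.not_enabled ht fun p hp => ?_)
      simp [initM, source_eq, hS, hp.ne]
    · refine absurd hf'.1 (hR.not_enabled ht fun p hp => ?_)
      simp only [finalM, sink_eq, if_pos hE]
      split_ifs <;> omega
  · have hMb := hf.1.2 R.freshBase (by simp [pre_freshBase_add_one hR.isPetri hS])
    rcases ih with hM | ⟨-, rfl⟩ | ⟨hE, rfl⟩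
    · have := reachable_apply_eq_zero_of_notMem_places hR.isPetri hR.source_mem hM
        (fun h => (lt_freshBase (Finset.mem_union_left _ h)).false)
      omega
    · exact Or.inl (fire_unique hf (fire_freshBase_add_one hR.isPetri hS) ▸ reachable_refl _)
    · simp [finalM, sink_eq, hE] at hMb
  · have hMe := hf.1.2 R.sink (by simp [pre_freshBase_add_three hR.isPetri hE])
    rcases ih with hM | ⟨hS, rfl⟩ | ⟨-, rfl⟩
    · obtain rfl := hsound.2.2 M hM hMe
      exact Or.inr (Or.inr ⟨hE, fire_unique hf (fire_freshBase_add_three hR.isPetri hE)⟩)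
    · simp [initM, source_eq, hS, he.ne] at hMe
    · simp only [finalM, sink_eq, if_pos hE] at hMe
      split_ifs at hMe <;> omega

theorem safe (hR : R.IsOpenWF) (hsafe : R.Safe) (hsound : R.Sound) :
    (Normalize R R.source R.sink).Safe := by
  intro M hM p
  rcases reachable_cases hR hsound hM with hM | ⟨-, rfl⟩ | ⟨-, rfl⟩
  · exact hsafe M hM p
  · simp only [initM]; split_ifs <;> omega
  · simp only [finalM]; split_ifs <;> omega

theorem sound (hR : R.IsOpenWF) (hsound : R.Sound) : (Normalize R R.source R.sink).Sound := by
  have hinit := reachable_initM hR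
  have hcomplete : ∀ M, R.reachable R.initM M →
      (Normalize R R.source R.sink).reachable M (Normalize R R.source R.sink).finalM :=
    fun M hM => reachable_trans (reachable_of_reachable hR (hsound.2.1 M hM)) (reachable_finalM hR)
  refine ⟨fun t ht => ?_, fun M hM => ?_, fun M hM hsink => ?_⟩
  · rcases mem_transitions.1 ht with ht | ⟨hS, rfl⟩ | ⟨hE, rfl⟩
    · obtain ⟨M, hM, hen⟩ := hsound.1 t ht
      exact ⟨M, reachable_trans hinit (reachable_of_reachable hR hM),
        ⟨mem_transitions.2 (Or.inl ht), pre_of_mem_transitions hR ht ▸ hen.2⟩⟩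
    · exact ⟨_, reachable_refl _, (fire_freshBase_add_one hR.isPetri hS).1⟩
    · exact ⟨R.finalM, reachable_trans hinit
        (reachable_of_reachable hR (hsound.2.1 _ (reachable_refl _))),
        (fire_freshBase_add_three hR.isPetri hE).1⟩
  · rcases reachable_cases hR hsound hM with hM | ⟨-, rfl⟩ | ⟨-, rfl⟩
    · exact hcomplete M hM
    · exact reachable_trans hinit (hcomplete _ (reachable_refl _))
    · exact reachable_refl _
  · have hb := R.source_lt_freshBase
    have he := R.sink_lt_freshBase
    rcases reachable_cases hR hsound hM with hM | ⟨hS, rfl⟩ | ⟨-, rfl⟩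
    · by_cases hE : (R.post R.sink).Nonempty
      · have := reachable_apply_eq_zero_of_notMem_places (q := R.freshBase + 2) hR.isPetri
          hR.source_mem hM fun h => by have := lt_freshBase (Finset.mem_union_left _ h); omega
        simp only [sink_eq, if_pos hE] at hsink
        omega
      · simp only [sink_eq, if_neg hE] at hsink
        exact (finalM_eq hE).symm ▸ hsound.2.2 M hM hsink
    · simp only [initM, source_eq, sink_eq, if_pos hS] at hsink
      split_ifs at hsink <;> omega
    · rfl

theorem pre_source (hR : R.IsPetri) :
    (Normalize R R.source R.sink).pre (Normalize R R.source R.sink).source = ∅ := by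
  have := R.source_lt_freshBase
  refine Finset.eq_empty_of_forall_notMem fun a ha => ?_
  rw [mem_pre, source_eq] at ha
  split_ifs at ha with hS
  · rcases ha with h | ⟨-, h⟩ | ⟨-, h⟩
    · exact (hR.lt_freshBase_of_mem_flow h).2.false
    all_goals omega
  · rcases ha with h | ⟨h, -⟩ | ⟨-, h⟩
    · exact hS ⟨a, Net.mem_pre.2 h⟩
    · exact hS h
    · omega

theorem post_sink (hR : R.IsPetri) :
    (Normalize R R.source R.sink).post (Normalize R R.source R.sink).sink = ∅ := by
  have := R.sink_lt_freshBase
  refine Finset.eq_empty_of_forall_notMem fun a ha => ?_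
  rw [mem_post, sink_eq] at ha
  split_ifs at ha with hE
  · rcases ha with h | ⟨-, h⟩ | ⟨-, h⟩
    · have := (hR.lt_freshBase_of_mem_flow h).1; omega
    all_goals omega
  · rcases ha with h | ⟨-, h⟩ | ⟨h, -⟩
    · exact hE ⟨a, Net.mem_post.2 h⟩
    · omega
    · exact hE h

theorem isPetri (hR : R.IsOpenWF) : (Normalize R R.source R.sink).IsPetri := by
  have hlt : ∀ x ∈ R.places ∪ R.transitions, x < R.freshBase := fun _ => lt_freshBase
  refine ⟨Finset.disjoint_left.2 fun x hp ht => ?_, fun e he => ?_⟩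
  · rcases mem_places.1 hp with hp | ⟨-, rfl⟩ | ⟨-, rfl⟩ <;>
      rcases mem_transitions.1 ht with ht | ⟨-, h⟩ | ⟨-, h⟩
    · exact Finset.disjoint_left.1 hR.isPetri.1 hp ht
    all_goals first
      | omega
      | have := hlt _ (Finset.mem_union_left _ hp); omega
      | have := hlt _ (Finset.mem_union_right _ ht); omega
  · rcases mem_flow.1 he with he | ⟨hS, rfl | rfl⟩ | ⟨hE, rfl | rfl⟩
    · rcases hR.isPetri.2 e he with ⟨h₁, h₂⟩ | ⟨h₁, h₂⟩
      · exact Or.inl ⟨mem_places.2 (Or.inl h₁), mem_transitions.2 (Or.inl h₂)⟩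
      · exact Or.inr ⟨mem_transitions.2 (Or.inl h₁), mem_places.2 (Or.inl h₂)⟩
    · exact Or.inl ⟨mem_places.2 (Or.inr (Or.inl ⟨hS, rfl⟩)),
        mem_transitions.2 (Or.inr (Or.inl ⟨hS, rfl⟩))⟩
    · exact Or.inr ⟨mem_transitions.2 (Or.inr (Or.inl ⟨hS, rfl⟩)),
        mem_places.2 (Or.inl hR.source_mem)⟩
    · exact Or.inl ⟨mem_places.2 (Or.inl hR.sink_mem),
        mem_transitions.2 (Or.inr (Or.inr ⟨hE, rfl⟩))⟩
    · exact Or.inr ⟨mem_transitions.2 (Or.inr (Or.inr ⟨hE, rfl⟩)),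
        mem_places.2 (Or.inr (Or.inr ⟨hE, rfl⟩))⟩

theorem pathRel_of_pathRel {x y : ℕ} (h : R.pathRel x y) :
    (Normalize R R.source R.sink).pathRel x y :=
  Relation.ReflTransGen.mono (fun _ _ he => mem_flow.2 (Or.inl he)) _ _ h

theorem source_mem (hR : R.IsOpenWF) :
    (Normalize R R.source R.sink).source ∈ (Normalize R R.source R.sink).places := by
  rw [source_eq]
  split_ifs with hS
  · exact mem_places.2 (Or.inr (Or.inl ⟨hS, rfl⟩))
  · exact mem_places.2 (Or.inl hR.source_mem)

theorem sink_mem (hR : R.IsOpenWF) :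
    (Normalize R R.source R.sink).sink ∈ (Normalize R R.source R.sink).places := by
  rw [sink_eq]
  split_ifs with hE
  · exact mem_places.2 (Or.inr (Or.inr ⟨hE, rfl⟩))
  · exact mem_places.2 (Or.inl hR.sink_mem)

theorem pre_nonempty (hR : R.IsOpenWF) : ∀ p ∈ (Normalize R R.source R.sink).places,
    p ≠ (Normalize R R.source R.sink).source → ((Normalize R R.source R.sink).pre p).Nonempty := by
  intro p hp hps
  rcases mem_places.1 hp with hp | ⟨hS, rfl⟩ | ⟨hE, rfl⟩
  · by_cases hpR : p = R.source
    · subst hpR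
      have hS : (R.pre R.source).Nonempty := by
        by_contra hS; simp [source_eq, hS] at hps
      exact ⟨_, mem_pre.2 (Or.inr (Or.inl ⟨hS, Or.inr ⟨rfl, rfl⟩⟩))⟩
    · obtain ⟨a, ha⟩ := hR.pre_nonempty p hp hpR
      exact ⟨a, mem_pre.2 (Or.inl (Net.mem_pre.1 ha))⟩
  · simp [source_eq, hS] at hps
  · exact ⟨_, mem_pre.2 (Or.inr (Or.inr ⟨hE, Or.inr ⟨rfl, rfl⟩⟩))⟩

theorem post_nonempty (hR : R.IsOpenWF) : ∀ p ∈ (Normalize R R.source R.sink).places,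
    p ≠ (Normalize R R.source R.sink).sink → ((Normalize R R.source R.sink).post p).Nonempty := by
  intro p hp hpe
  rcases mem_places.1 hp with hp | ⟨hS, rfl⟩ | ⟨hE, rfl⟩
  · by_cases hpR : p = R.sink
    · subst hpR
      have hE : (R.post R.sink).Nonempty := by
        by_contra hE; simp [sink_eq, hE] at hpe
      exact ⟨_, mem_post.2 (Or.inr (Or.inr ⟨hE, Or.inl ⟨rfl, rfl⟩⟩))⟩
    · obtain ⟨a, ha⟩ := hR.post_nonempty p hp hpR
      exact ⟨a, mem_post.2 (Or.inl (Net.mem_post.1 ha))⟩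
  · exact ⟨_, mem_post.2 (Or.inr (Or.inl ⟨hS, Or.inl ⟨rfl, rfl⟩⟩))⟩
  · simp [sink_eq, hE] at hpe

theorem pathRel (hR : R.IsOpenWF) : ∀ x ∈ (Normalize R R.source R.sink).places ∪
      (Normalize R R.source R.sink).transitions,
    (Normalize R R.source R.sink).pathRel (Normalize R R.source R.sink).source x ∧
      (Normalize R R.source R.sink).pathRel x (Normalize R R.source R.sink).sink := by
  have edge {x y : ℕ} (h : (x, y) ∈ (Normalize R R.source R.sink).flow) :
      (Normalize R R.source R.sink).pathRel x y := Relation.ReflTransGen.single h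
  have hS₁ (hS : (R.pre R.source).Nonempty) :=
    edge (mem_flow.2 (Or.inr (Or.inl ⟨hS, Or.inl rfl⟩)))
  have hS₂ (hS : (R.pre R.source).Nonempty) :=
    edge (mem_flow.2 (Or.inr (Or.inl ⟨hS, Or.inr rfl⟩)))
  have hE₁ (hE : (R.post R.sink).Nonempty) :=
    edge (mem_flow.2 (Or.inr (Or.inr ⟨hE, Or.inl rfl⟩)))
  have hE₂ (hE : (R.post R.sink).Nonempty) :=
    edge (mem_flow.2 (Or.inr (Or.inr ⟨hE, Or.inr rfl⟩)))
  have hpath : ∀ x ∈ R.places ∪ R.transitions,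
      (Normalize R R.source R.sink).pathRel (Normalize R R.source R.sink).source x ∧
      (Normalize R R.source R.sink).pathRel x (Normalize R R.source R.sink).sink := by
    intro x hx
    refine ⟨.trans ?_ (pathRel_of_pathRel (hR.pathRel x hx).1),
      (pathRel_of_pathRel (hR.pathRel x hx).2).trans ?_⟩
    · rw [source_eq]
      split_ifs with hS
      exacts [(hS₁ hS).trans (hS₂ hS), .refl]
    · rw [sink_eq]
      split_ifs with hE
      exacts [(hE₁ hE).trans (hE₂ hE), .refl]
  have hsource := hpath _ (Finset.mem_union_left _ hR.source_mem)
  have hsink := hpath _ (Finset.mem_union_left _ hR.sink_mem)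
  intro x hx
  rcases Finset.mem_union.1 hx with hx | hx
  · rcases mem_places.1 hx with hx | ⟨hS, rfl⟩ | ⟨hE, rfl⟩
    · exact hpath x (Finset.mem_union_left _ hx)
    · exact ⟨by simp [source_eq, hS]; exact .refl, (hS₁ hS).trans ((hS₂ hS).trans hsource.2)⟩
    · exact ⟨hsink.1.trans ((hE₁ hE).trans (hE₂ hE)), by simp [sink_eq, hE]; exact .refl⟩
  · rcases mem_transitions.1 hx with hx | ⟨hS, rfl⟩ | ⟨hE, rfl⟩
    · exact hpath x (Finset.mem_union_right _ hx)
    · exact ⟨by simpa [source_eq, hS] using hS₁ hS, (hS₂ hS).trans hsource.2⟩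
    · exact ⟨hsink.1.trans (hE₁ hE), by simpa [sink_eq, hE] using hE₂ hE⟩

theorem isOpenWF (hR : R.IsOpenWF) : (Normalize R R.source R.sink).IsOpenWF :=
  ⟨isPetri hR, source_mem hR, sink_mem hR, pre_nonempty hR, post_nonempty hR, pathRel hR⟩

theorem isWF (hR : R.IsOpenWF) : (Normalize R R.source R.sink).IsWF :=
  (isOpenWF hR).isWF (pre_source hR.isPetri) (post_sink hR.isPetri)

end Normalize

/-! ### Parts with a single entry and a single exit -/

namespace Net

structure IsSingleEntryExit (N : Net) (T : Finset ℕ) (ps pe : ℕ) : Prop where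
  isWF : N.IsWF
  subset : T ⊆ N.transitions
  entry_eq : N.entry T = {ps}
  exit_eq : N.exit T = {pe}

namespace IsSingleEntryExit

variable {N : Net} {T : Finset ℕ} {ps pe q t u : ℕ}

theorem ps_mem_entry (hT : N.IsSingleEntryExit T ps pe) : ps ∈ N.entry T := by
  simp [hT.entry_eq]

theorem pe_mem_exit (hT : N.IsSingleEntryExit T ps pe) : pe ∈ N.exit T := by
  simp [hT.exit_eq]

theorem eq_ps_of_mem_entry (hT : N.IsSingleEntryExit T ps pe) (hq : q ∈ N.entry T) : q = ps := by
  simpa [hT.entry_eq] using hq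

theorem eq_pe_of_mem_exit (hT : N.IsSingleEntryExit T ps pe) (hq : q ∈ N.exit T) : q = pe := by
  simpa [hT.exit_eq] using hq

theorem pre_subset_adjP (hT : N.IsSingleEntryExit T ps pe) (ht : t ∈ T) :
    N.pre t ⊆ N.adjP T := fun q hq =>
  mem_adjP.2 ⟨hT.isWF.1.mem_places_of_mem_pre (hT.subset ht) hq,
    t, by simp [ht, mem_post, mem_pre.1 hq]⟩

theorem post_subset_adjP (hT : N.IsSingleEntryExit T ps pe) (ht : t ∈ T) :
    N.post t ⊆ N.adjP T := fun q hq =>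
  mem_adjP.2 ⟨hT.isWF.1.mem_places_of_mem_post (hT.subset ht) hq,
    t, by simp [ht, mem_pre, mem_post.1 hq]⟩

theorem notMem_of_mem_adjP (hT : N.IsSingleEntryExit T ps pe) (hq : q ∈ N.adjP T) : q ∉ T :=
  fun h => Finset.disjoint_left.1 hT.isWF.1.1 (Finset.mem_filter.1 hq).1 (hT.subset h)

theorem ps_mem_adjP (hT : N.IsSingleEntryExit T ps pe) : ps ∈ N.adjP T := by
  obtain ⟨hps, ⟨t, ht⟩, -⟩ := Finset.mem_filter.1 hT.ps_mem_entry
  exact mem_adjP.2 ⟨hps, t, by simp_all⟩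

theorem pe_mem_adjP (hT : N.IsSingleEntryExit T ps pe) : pe ∈ N.adjP T := by
  obtain ⟨hpe, ⟨t, ht⟩, -⟩ := Finset.mem_filter.1 hT.pe_mem_exit
  exact mem_adjP.2 ⟨hpe, t, by simp_all⟩

theorem produces_pe (hT : N.IsSingleEntryExit T ps pe) : (N.pre pe ∩ T).Nonempty :=
  (Finset.mem_filter.1 hT.pe_mem_exit).2.1

theorem eq_ps_of_pre_inter_eq_empty (hT : N.IsSingleEntryExit T ps pe) (hq : q ∈ N.adjP T)
    (hpre : N.pre q ∩ T = ∅) : q = ps := by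
  obtain ⟨hqP, a, ha⟩ := mem_adjP.1 hq
  have hpost : (N.post q ∩ T).Nonempty := by
    simp only [Finset.union_inter_distrib_right, hpre, Finset.empty_union] at ha
    exact ⟨a, ha⟩
  refine hT.eq_ps_of_mem_entry (Finset.mem_filter.2 ⟨hqP, hpost, ?_⟩)
  by_cases hsrc : q = N.source
  · exact Or.inl hsrc
  · obtain ⟨u, hu⟩ := hT.isWF.isOpenWF.pre_nonempty q hqP hsrc
    have huT : u ∉ T := fun h => by simpa [hpre] using Finset.mem_inter.2 ⟨hu, h⟩
    exact Or.inr ⟨u, by simp [hu, huT, hT.isWF.1.mem_transitions_of_mem_pre hqP hu]⟩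

theorem eq_pe_of_post_inter_eq_empty (hT : N.IsSingleEntryExit T ps pe) (hq : q ∈ N.adjP T)
    (hpost : N.post q ∩ T = ∅) : q = pe := by
  obtain ⟨hqP, a, ha⟩ := mem_adjP.1 hq
  have hpre : (N.pre q ∩ T).Nonempty := by
    simp only [Finset.union_inter_distrib_right, hpost, Finset.union_empty] at ha
    exact ⟨a, ha⟩
  refine hT.eq_pe_of_mem_exit (Finset.mem_filter.2 ⟨hqP, hpre, ?_⟩)
  by_cases hsnk : q = N.sink
  · exact Or.inl hsnk
  · obtain ⟨u, hu⟩ := hT.isWF.isOpenWF.post_nonempty q hqP hsnk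
    have huT : u ∉ T := fun h => by simpa [hpost] using Finset.mem_inter.2 ⟨hu, h⟩
    exact Or.inr ⟨u, by simp [hu, huT, hT.isWF.1.mem_transitions_of_mem_post hqP hu]⟩

theorem eq_ps_of_mem_post (hT : N.IsSingleEntryExit T ps pe) (hu : u ∈ N.transitions)
    (huT : u ∉ T) (hq : q ∈ N.post u) (hcons : (N.post q ∩ T).Nonempty) : q = ps :=
  hT.eq_ps_of_mem_entry (Finset.mem_filter.2 ⟨hT.isWF.1.mem_places_of_mem_post hu hq, hcons,
    Or.inr ⟨u, by simp [hu, huT, mem_pre, mem_post.1 hq]⟩⟩)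

theorem eq_pe_of_mem_pre (hT : N.IsSingleEntryExit T ps pe) (hu : u ∈ N.transitions)
    (huT : u ∉ T) (hq : q ∈ N.pre u) (hprod : (N.pre q ∩ T).Nonempty) : q = pe :=
  hT.eq_pe_of_mem_exit (Finset.mem_filter.2 ⟨hT.isWF.1.mem_places_of_mem_pre hu hq, hprod,
    Or.inr ⟨u, by simp [hu, huT, mem_post, mem_pre.1 hq]⟩⟩)

theorem notMem_post_of_ne (hT : N.IsSingleEntryExit T ps pe) (hu : u ∈ N.transitions)
    (huT : u ∉ T) (hq : q ∈ N.adjP T) (hps : q ≠ ps) (hpe : q ≠ pe) : q ∉ N.post u :=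
  fun h => hps (hT.eq_ps_of_mem_post hu huT h (Finset.nonempty_iff_ne_empty.2
    fun h' => hpe (hT.eq_pe_of_post_inter_eq_empty hq h')))

theorem notMem_pre_of_ne (hT : N.IsSingleEntryExit T ps pe) (hu : u ∈ N.transitions)
    (huT : u ∉ T) (hq : q ∈ N.adjP T) (hps : q ≠ ps) (hpe : q ≠ pe) : q ∉ N.pre u :=
  fun h => hpe (hT.eq_pe_of_mem_pre hu huT h (Finset.nonempty_iff_ne_empty.2
    fun h' => hps (hT.eq_ps_of_pre_inter_eq_empty hq h')))

theorem source_eq_ps (hT : N.IsSingleEntryExit T ps pe) (hq : N.source ∈ N.adjP T) :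
    N.source = ps :=
  hT.eq_ps_of_pre_inter_eq_empty hq (by
    rw [(hT.isWF.2.2.2.1 _ hT.isWF.2.1).2 rfl, Finset.empty_inter])

theorem sink_eq_pe (hT : N.IsSingleEntryExit T ps pe) (hq : N.sink ∈ N.adjP T) :
    N.sink = pe :=
  hT.eq_pe_of_post_inter_eq_empty hq (by
    rw [(hT.isWF.2.2.2.2.1 _ hT.isWF.2.2.1).2 rfl, Finset.empty_inter])

theorem pe_ne_source (hT : N.IsSingleEntryExit T ps pe) : pe ≠ N.source := fun h => by
  obtain ⟨a, ha⟩ := hT.produces_pe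
  simp [h, (hT.isWF.2.2.2.1 _ hT.isWF.2.1).2 rfl] at ha

end IsSingleEntryExit

end Net

namespace cgprojectRaw

variable {N : Net} {T : Finset ℕ} {ps pe q t : ℕ} {m m' : Marking}

theorem source_eq (hT : N.IsSingleEntryExit T ps pe) : (cgprojectRaw N T).source = ps := by
  simp [cgprojectRaw, hT.entry_eq]

theorem sink_eq (hT : N.IsSingleEntryExit T ps pe) : (cgprojectRaw N T).sink = pe := by
  simp [cgprojectRaw, hT.exit_eq]

theorem mem_flow {e : ℕ × ℕ} : e ∈ (cgprojectRaw N T).flow ↔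
    e ∈ N.flow ∧ (e.1 ∈ N.adjP T ∧ e.2 ∈ T ∨ e.1 ∈ T ∧ e.2 ∈ N.adjP T) :=
  Finset.mem_filter

theorem pre_of_mem (hT : N.IsSingleEntryExit T ps pe) (ht : t ∈ T) :
    (cgprojectRaw N T).pre t = N.pre t := by
  ext a
  rw [Net.mem_pre, Net.mem_pre, mem_flow]
  exact ⟨And.left, fun h => ⟨h, Or.inl ⟨hT.pre_subset_adjP ht (Net.mem_pre.2 h), ht⟩⟩⟩

theorem post_of_mem (hT : N.IsSingleEntryExit T ps pe) (ht : t ∈ T) :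
    (cgprojectRaw N T).post t = N.post t := by
  ext a
  rw [Net.mem_post, Net.mem_post, mem_flow]
  exact ⟨And.left, fun h => ⟨h, Or.inr ⟨ht, hT.post_subset_adjP ht (Net.mem_post.2 h)⟩⟩⟩

theorem pre_of_mem_adjP (hT : N.IsSingleEntryExit T ps pe) (hq : q ∈ N.adjP T) :
    (cgprojectRaw N T).pre q = N.pre q ∩ T := by
  ext a
  rw [Net.mem_pre, Finset.mem_inter, Net.mem_pre, mem_flow]
  have := hT.notMem_of_mem_adjP hq
  constructor
  · rintro ⟨h, ⟨-, h'⟩ | ⟨h', -⟩⟩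
    exacts [absurd h' this, ⟨h, h'⟩]
  · exact fun ⟨h, h'⟩ => ⟨h, Or.inr ⟨h', hq⟩⟩

theorem post_of_mem_adjP (hT : N.IsSingleEntryExit T ps pe) (hq : q ∈ N.adjP T) :
    (cgprojectRaw N T).post q = N.post q ∩ T := by
  ext a
  rw [Net.mem_post, Finset.mem_inter, Net.mem_post, mem_flow]
  have := hT.notMem_of_mem_adjP hq
  constructor
  · rintro ⟨h, ⟨-, h'⟩ | ⟨h', -⟩⟩
    exacts [⟨h, h'⟩, absurd h' this]
  · exact fun ⟨h, h'⟩ => ⟨h, Or.inl ⟨hq, h'⟩⟩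

theorem isPetri (hT : N.IsSingleEntryExit T ps pe) : (cgprojectRaw N T).IsPetri :=
  ⟨Finset.disjoint_left.2 fun _ hq => hT.notMem_of_mem_adjP hq,
    fun _ he => (mem_flow.1 he).2⟩

theorem initM_apply (hT : N.IsSingleEntryExit T ps pe) :
    (cgprojectRaw N T).initM q = if q = ps then 1 else 0 := by
  simp [initM, source_eq hT]

theorem finalM_apply (hT : N.IsSingleEntryExit T ps pe) :
    (cgprojectRaw N T).finalM q = if q = pe then 1 else 0 := by
  simp [finalM, sink_eq hT]

theorem pre_nonempty_of_mem (hT : N.IsSingleEntryExit T ps pe) (ht : t ∈ T) :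
    ((cgprojectRaw N T).pre t).Nonempty :=
  pre_of_mem hT ht ▸ hT.isWF.isOpenWF.pre_nonempty_of_mem_transitions (hT.subset ht)

theorem post_nonempty_of_mem (hT : N.IsSingleEntryExit T ps pe) (ht : t ∈ T) :
    ((cgprojectRaw N T).post t).Nonempty :=
  post_of_mem hT ht ▸ hT.isWF.isOpenWF.post_nonempty_of_mem_transitions (hT.subset ht)

theorem reachable_add (hT : N.IsSingleEntryExit T ps pe) (h : (cgprojectRaw N T).reachable m m')
    (D : Marking) : N.reachable (m + D) (m' + D) :=
  Net.reachable_add (reachable_congr (fun _ ht => ⟨hT.subset ht, (pre_of_mem hT ht).symm,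
    (post_of_mem hT ht).symm⟩) h) D

theorem initM_eq (hT : N.IsSingleEntryExit T ps pe) (hsrc : N.source = ps) :
    (cgprojectRaw N T).initM = N.initM := by
  funext q
  simp [initM, source_eq hT, hsrc]

theorem initM_add_sub (hT : N.IsSingleEntryExit T ps pe) {M : Marking} (hM : 1 ≤ M ps) :
    (cgprojectRaw N T).initM + (M - (cgprojectRaw N T).initM) = M := by
  funext p
  simp only [Pi.add_apply, Pi.sub_apply, initM_apply hT]
  split_ifs with h
  · subst h; omega
  · omega

theorem eq_initM_of_reachable (hT : N.IsSingleEntryExit T ps pe) (hps : N.pre ps ∩ T = ∅)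
    (h : (cgprojectRaw N T).reachable (cgprojectRaw N T).initM m) (hm : 1 ≤ m ps) :
    m = (cgprojectRaw N T).initM :=
  Net.eq_initM_of_reachable (by rw [source_eq hT, pre_of_mem_adjP hT hT.ps_mem_adjP, hps])
    (fun _ => pre_nonempty_of_mem hT) h (by rwa [source_eq hT])

end cgprojectRaw

/-! ### Local markings of a part -/

namespace Net

/-- `m` is the local marking of the part `T` inside the marking `M` of the whole net. At the exit
point the outside may already have consumed tokens, so there `M` is only bounded by `m`, and only
if the part itself consumes from `pe`. -/
def IsPartMarking (N : Net) (T : Finset ℕ) (pe : ℕ) (M m : Marking) : Prop :=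
  (∀ q ∈ N.adjP T, q ≠ pe → M q = m q) ∧ ((N.post pe ∩ T).Nonempty → M pe ≤ m pe)

theorem IsPartMarking.add {N : Net} {T : Finset ℕ} {pe : ℕ} {m₀ D : Marking}
    (h : N.IsPartMarking T pe (m₀ + D) m₀) (m : Marking) : N.IsPartMarking T pe (m + D) m :=
  ⟨fun q hq hqe => by have := h.1 q hq hqe; simp only [Pi.add_apply] at this ⊢; omega,
    fun hcons => by have := h.2 hcons; simp only [Pi.add_apply] at this ⊢; omega⟩

namespace IsSingleEntryExit

variable {N : Net} {T : Finset ℕ} {ps pe q t u : ℕ} {M M' m : Marking}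

theorem enabled_of_isPartMarking (hT : N.IsSingleEntryExit T ps pe) (ht : t ∈ T)
    (h : N.IsPartMarking T pe M m) (hen : N.enabled t M) : (cgprojectRaw N T).enabled t m := by
  refine ⟨ht, fun p hp => ?_⟩
  rw [cgprojectRaw.pre_of_mem hT ht] at hp
  have := hen.2 p hp
  by_cases hpe : p = pe
  · subst hpe
    exact this.trans (h.2 ⟨t, by simp [ht, mem_post, mem_pre.1 hp]⟩)
  · rwa [← h.1 p (hT.pre_subset_adjP ht hp) hpe]

theorem exists_fire_of_mem (hT : N.IsSingleEntryExit T ps pe) (ht : t ∈ T)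
    (h : N.IsPartMarking T pe M m) (hf : N.fire t M M') :
    ∃ m', (cgprojectRaw N T).fire t m m' ∧ N.IsPartMarking T pe M' m' := by
  obtain ⟨m', hf'⟩ := exists_fire (hT.enabled_of_isPartMarking ht h hf.1)
  have hbal : ∀ q, M' q + m q = M q + m' q := fun q => by
    have h₁ := hf.2 q
    have h₂ := hf'.2 q
    rw [cgprojectRaw.pre_of_mem hT ht, cgprojectRaw.post_of_mem hT ht] at h₂
    omega
  refine ⟨m', hf', fun q hq hqe => ?_, fun hcons => ?_⟩
  · have := hbal q; have := h.1 q hq hqe; omega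
  · have := hbal pe; have := h.2 hcons; omega

theorem pe_notMem_post (hT : N.IsSingleEntryExit T ps pe) (hu : u ∈ N.transitions)
    (huT : u ∉ T) (hfeed : ps ∉ N.post u) (hcons : (N.post pe ∩ T).Nonempty) :
    pe ∉ N.post u :=
  fun h => hfeed (hT.eq_ps_of_mem_post hu huT h hcons ▸ h)

theorem isPartMarking_fire_of_notMem (hT : N.IsSingleEntryExit T ps pe) (huT : u ∉ T)
    (hfeed : ps ∉ N.post u) (hdrain : ps ∈ N.pre u → ps = pe) (h : N.IsPartMarking T pe M m)
    (hf : N.fire u M M') : N.IsPartMarking T pe M' m := by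
  have hu := hf.1.1
  refine ⟨fun q hq hqe => ?_, fun hcons => ?_⟩
  · by_cases hqs : q = ps
    · subst hqs
      rw [fire_eq_of_notMem hf (fun h => hqe (hdrain h)) hfeed, h.1 q hq hqe]
    · rw [fire_eq_of_notMem hf (hT.notMem_pre_of_ne hu huT hq hqs hqe)
        (hT.notMem_post_of_ne hu huT hq hqs hqe), h.1 q hq hqe]
  · have hbal := hf.2 pe
    have := h.2 hcons
    simp only [hT.pe_notMem_post hu huT hfeed hcons, if_false] at hbal
    omega

theorem eq_initM_of_drain (hT : N.IsSingleEntryExit T ps pe) (huT : u ∉ T)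
    (hdrain : ps ∈ N.pre u) (hne : ps ≠ pe)
    (hm : (cgprojectRaw N T).reachable (cgprojectRaw N T).initM m ∨ m = 0)
    (h : N.IsPartMarking T pe M m) (hen : N.enabled u M) :
    m = (cgprojectRaw N T).initM ∧ N.pre ps ∩ T = ∅ := by
  have hnoprod : N.pre ps ∩ T = ∅ := Finset.not_nonempty_iff_eq_empty.1 fun hprod =>
    hne (hT.eq_pe_of_mem_pre hen.1 huT hdrain hprod)
  have hmps : 1 ≤ m ps := h.1 ps hT.ps_mem_adjP hne ▸ hen.2 ps hdrain
  refine ⟨?_, hnoprod⟩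
  rcases hm with hm | rfl
  · exact cgprojectRaw.eq_initM_of_reachable hT hnoprod hm hmps
  · simp at hmps

theorem isPartMarking_fire_of_drain (hT : N.IsSingleEntryExit T ps pe) (huT : u ∉ T)
    (hdrain : ps ∈ N.pre u) (hne : ps ≠ pe) (hfeed : ps ∉ N.post u)
    (hm : (cgprojectRaw N T).reachable (cgprojectRaw N T).initM m ∨ m = 0)
    (h : N.IsPartMarking T pe M m) (hf : N.fire u M M') :
    m = (cgprojectRaw N T).initM ∧ N.pre ps ∩ T = ∅ ∧ N.IsPartMarking T pe M' 0 := by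
  have hu := hf.1.1
  obtain ⟨hinit, hnoprod⟩ := hT.eq_initM_of_drain huT hdrain hne hm h hf.1
  refine ⟨hinit, hnoprod, fun q hq hqe => ?_, fun hcons => ?_⟩
  · have hMq := h.1 q hq hqe
    rw [hinit, cgprojectRaw.initM_apply hT] at hMq
    by_cases hqs : q = ps
    · subst hqs
      have := hf.2 q
      simp only [hdrain, hfeed, if_true, if_false, hMq] at this
      simp only [Pi.zero_apply]
      omega
    · rw [fire_eq_of_notMem hf (hT.notMem_pre_of_ne hu huT hq hqs hqe)
        (hT.notMem_post_of_ne hu huT hq hqs hqe), hMq, if_neg hqs, Pi.zero_apply]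
  · have hbal := hf.2 pe
    have hle := h.2 hcons
    rw [hinit, cgprojectRaw.initM_apply hT, if_neg (Ne.symm hne)] at hle
    simp only [hT.pe_notMem_post hu huT hfeed hcons, if_false] at hbal
    simp only [Pi.zero_apply]
    omega

/-- Replaying on top of `M` a run of the part that leads to `m` gives a reachable marking of
`N`, which is safe. -/
theorem add_le_of_reachable (hT : N.IsSingleEntryExit T ps pe) (hsafe : N.Safe)
    (hm : (cgprojectRaw N T).reachable (cgprojectRaw N T).initM m ∨ m = 0)
    (hM : N.reachable N.initM M) (hps : 1 ≤ M ps) (q : ℕ) :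
    m q + M q ≤ 1 + (cgprojectRaw N T).initM q := by
  rcases hm with hm | rfl
  · have := hsafe _ (reachable_trans hM (cgprojectRaw.initM_add_sub hT hps ▸
      cgprojectRaw.reachable_add hT hm (M - (cgprojectRaw N T).initM))) q
    simp only [Pi.add_apply, Pi.sub_apply] at this
    omega
  · have := hsafe M hM q
    simp only [Pi.zero_apply]
    omega

/-- When an outside transition feeds the entry point, safety forces the part to be idle. -/
theorem eq_zero_of_feed (hT : N.IsSingleEntryExit T ps pe) (hsafe : N.Safe)
    (huT : u ∉ T) (hfeed : ps ∈ N.post u) (hM : N.reachable N.initM M)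
    (hm : (cgprojectRaw N T).reachable (cgprojectRaw N T).initM m ∨ m = 0)
    (h : N.IsPartMarking T pe M m) (hf : N.fire u M M') :
    (∀ q ∈ N.adjP T, q ≠ ps → q ≠ pe → m q = 0 ∧ M' q = 0) ∧
      (ps ≠ pe → M' ps = 1 ∧ (ps ∉ N.pre u → m ps = 0)) := by
  have hu := hf.1.1
  have hps := one_le_of_fire_of_mem_post hf hfeed
  have hbound := hT.add_le_of_reachable hsafe hm (hM.fire hf) hps
  simp only [cgprojectRaw.initM_apply hT] at hbound
  refine ⟨fun q hq hqs hqe => ?_, fun hne => ?_⟩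
  · have h₁ := fire_eq_of_notMem hf (hT.notMem_pre_of_ne hu huT hq hqs hqe)
      (hT.notMem_post_of_ne hu huT hq hqs hqe)
    have h₂ := h.1 q hq hqe
    have h₃ := hbound q
    rw [if_neg hqs] at h₃
    omega
  · have h₁ := hf.2 ps
    have h₂ := h.1 ps hT.ps_mem_adjP hne
    have h₃ := hbound ps
    rw [if_pos rfl] at h₃
    simp only [hfeed, if_true] at h₁
    refine ⟨by split_ifs at h₁ <;> omega, fun hnd => ?_⟩
    rw [if_neg hnd] at h₁
    omega

theorem isPartMarking_fire_of_feed (hT : N.IsSingleEntryExit T ps pe) (hsafe : N.Safe)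
    (huT : u ∉ T) (hfeed : ps ∈ N.post u) (hM : N.reachable N.initM M)
    (hm : (cgprojectRaw N T).reachable (cgprojectRaw N T).initM m ∨ m = 0)
    (h : N.IsPartMarking T pe M m) (hf : N.fire u M M') :
    N.IsPartMarking T pe M' (cgprojectRaw N T).initM := by
  obtain ⟨hidle, hentry⟩ := hT.eq_zero_of_feed hsafe huT hfeed hM hm h hf
  refine ⟨fun q hq hqe => ?_, fun hcons => ?_⟩ <;> rw [cgprojectRaw.initM_apply hT]
  · by_cases hqs : q = ps
    · rw [if_pos hqs, hqs]
      exact (hentry (hqs ▸ hqe)).1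
    · rw [if_neg hqs]
      exact (hidle q hq hqs hqe).2
  · by_cases hne : ps = pe
    · rw [if_pos hne.symm]
      exact hsafe _ (hM.fire hf) pe
    · have hpe : pe ∉ N.post u := fun h => hne (hT.eq_ps_of_mem_post hf.1.1 huT h hcons).symm
      have h₁ := hf.2 pe
      have h₂ := h.2 hcons
      have h₃ := hT.add_le_of_reachable hsafe hm (hM.fire hf)
        (one_le_of_fire_of_mem_post hf hfeed) pe
      rw [cgprojectRaw.initM_apply hT, if_neg (Ne.symm hne)] at h₃
      rw [if_neg (Ne.symm hne)]
      simp only [hpe, if_false] at h₁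
      omega

theorem idle_or_eq_initM_of_feed (hT : N.IsSingleEntryExit T ps pe) (hsafe : N.Safe)
    (huT : u ∉ T) (hfeed : ps ∈ N.post u) (hM : N.reachable N.initM M)
    (hm : (cgprojectRaw N T).reachable (cgprojectRaw N T).initM m ∨ m = 0)
    (h : N.IsPartMarking T pe M m) (hf : N.fire u M M') :
    (∀ q ∈ N.adjP T, q ≠ pe → m q = 0) ∨
      (m = (cgprojectRaw N T).initM ∧ N.pre ps ∩ T = ∅ ∧ ps ≠ pe) := by
  obtain ⟨hidle, hentry⟩ := hT.eq_zero_of_feed hsafe huT hfeed hM hm h hf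
  by_cases hne : ps = pe
  · exact Or.inl fun q hq hqe => (hidle q hq (hne ▸ hqe) hqe).1
  by_cases hdrain : ps ∈ N.pre u
  · obtain ⟨hinit, hnp⟩ := hT.eq_initM_of_drain huT hdrain hne hm h hf.1
    exact Or.inr ⟨hinit, hnp, hne⟩
  · refine Or.inl fun q hq hqe => ?_
    by_cases hqs : q = ps
    · exact hqs ▸ (hentry hne).2 hdrain
    · exact (hidle q hq hqs hqe).1

theorem exists_isPartMarking_initM (hT : N.IsSingleEntryExit T ps pe) :
    ∃ m, ((cgprojectRaw N T).reachable (cgprojectRaw N T).initM m ∨ m = 0) ∧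
      N.IsPartMarking T pe N.initM m := by
  have hpe : N.initM pe = 0 := by simp [initM, hT.pe_ne_source]
  by_cases hsrc : N.source = ps
  · refine ⟨_, Or.inl (reachable_refl _), fun q _ _ => ?_, fun _ => by omega⟩
    rw [cgprojectRaw.initM_eq hT hsrc]
  · refine ⟨0, Or.inr rfl, fun q hq _ => ?_, fun _ => by simp [hpe]⟩
    have : q ≠ N.source := fun h => hsrc (hT.source_eq_ps (h ▸ hq))
    simp [initM, this]

theorem exists_isPartMarking (hT : N.IsSingleEntryExit T ps pe) (hsafe : N.Safe)
    (hM : N.reachable N.initM M) :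
    ∃ m, ((cgprojectRaw N T).reachable (cgprojectRaw N T).initM m ∨ m = 0) ∧
      N.IsPartMarking T pe M m := by
  refine reachable_induction hM hT.exists_isPartMarking_initM
    fun M u M' hM ⟨m, hm, h⟩ hf => ?_
  by_cases huT : u ∈ T
  · obtain ⟨m', hf', h'⟩ := hT.exists_fire_of_mem huT h hf
    refine ⟨m', Or.inl ?_, h'⟩
    rcases hm with hm | rfl
    · exact hm.fire hf'
    · obtain ⟨p, hp⟩ := cgprojectRaw.pre_nonempty_of_mem hT huT
      simpa using hf'.1.2 p hp
  by_cases hfeed : ps ∈ N.post u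
  · exact ⟨_, Or.inl (reachable_refl _),
      hT.isPartMarking_fire_of_feed hsafe huT hfeed hM hm h hf⟩
  by_cases hdrain : ps ∈ N.pre u ∧ ps ≠ pe
  · exact ⟨0, Or.inr rfl,
      (hT.isPartMarking_fire_of_drain huT hdrain.1 hdrain.2 hfeed hm h hf).2.2⟩
  · exact ⟨m, hm, hT.isPartMarking_fire_of_notMem huT hfeed
      (fun h' => by_contra fun hne => hdrain ⟨h', hne⟩) h hf⟩

theorem exists_reachable_add_initM (hT : N.IsSingleEntryExit T ps pe) (hsafe : N.Safe)
    (hsound : N.Sound) : ∃ D, N.reachable N.initM ((cgprojectRaw N T).initM + D) ∧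
      N.IsPartMarking T pe ((cgprojectRaw N T).initM + D) (cgprojectRaw N T).initM := by
  rcases (Finset.mem_filter.1 hT.ps_mem_entry).2.2 with hsrc | ⟨u, hu⟩
  · refine ⟨0, ?_, ?_⟩ <;> rw [add_zero, cgprojectRaw.initM_eq hT hsrc.symm]
    · exact reachable_refl _
    · exact ⟨fun q _ _ => rfl, fun _ => le_rfl⟩
  · obtain ⟨hups, hut, huT⟩ : u ∈ N.pre ps ∧ u ∈ N.transitions ∧ u ∉ T := by simpa using hu
    obtain ⟨M, hM, hen⟩ := hsound.1 u hut
    obtain ⟨M', hf⟩ := exists_fire hen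
    obtain ⟨m, hm, h⟩ := hT.exists_isPartMarking hsafe hM
    have hfeed : ps ∈ N.post u := mem_post.2 (mem_pre.1 hups)
    refine ⟨M' - (cgprojectRaw N T).initM, ?_, ?_⟩ <;>
      rw [cgprojectRaw.initM_add_sub hT (one_le_of_fire_of_mem_post hf hfeed)]
    · exact hM.fire hf
    · exact hT.isPartMarking_fire_of_feed hsafe huT hfeed hM hm h hf

theorem exists_reachable_add (hT : N.IsSingleEntryExit T ps pe) (hsafe : N.Safe)
    (hsound : N.Sound) (hm : (cgprojectRaw N T).reachable (cgprojectRaw N T).initM m) :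
    ∃ D, N.reachable N.initM (m + D) ∧ N.IsPartMarking T pe (m + D) m :=
  let ⟨D, hD, h⟩ := hT.exists_reachable_add_initM hsafe hsound
  ⟨D, reachable_trans hD (cgprojectRaw.reachable_add hT hm D), h.add m⟩

theorem cgprojectRaw_safe (hT : N.IsSingleEntryExit T ps pe) (hsafe : N.Safe)
    (hsound : N.Sound) : (cgprojectRaw N T).Safe := fun m hm q => by
  obtain ⟨D, hD, -⟩ := hT.exists_reachable_add hsafe hsound hm
  have := hsafe _ hD q
  simp only [Pi.add_apply] at this
  omega

theorem cgprojectRaw_live (hT : N.IsSingleEntryExit T ps pe) (hsafe : N.Safe)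
    (hsound : N.Sound) (ht : t ∈ T) :
    ∃ m, (cgprojectRaw N T).reachable (cgprojectRaw N T).initM m ∧
      (cgprojectRaw N T).enabled t m := by
  obtain ⟨M, hM, hen⟩ := hsound.1 t (hT.subset ht)
  obtain ⟨m, hm, h⟩ := hT.exists_isPartMarking hsafe hM
  have hen' := hT.enabled_of_isPartMarking ht h hen
  refine ⟨m, hm.resolve_right ?_, hen'⟩
  rintro rfl
  obtain ⟨p, hp⟩ := cgprojectRaw.pre_nonempty_of_mem hT ht
  simpa using hen'.2 p hp

theorem eq_finalM_of_idle (hT : N.IsSingleEntryExit T ps pe) (hsafe : (cgprojectRaw N T).Safe)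
    (hm : (cgprojectRaw N T).reachable (cgprojectRaw N T).initM m)
    (hidle : ∀ q ∈ N.adjP T, q ≠ pe → m q = 0) : m = (cgprojectRaw N T).finalM := by
  have hzero : ∀ q, q ≠ pe → m q = 0 := fun q hqe => by
    by_cases hq : q ∈ N.adjP T
    · exact hidle q hq hqe
    · exact reachable_apply_eq_zero_of_notMem_places (cgprojectRaw.isPetri hT)
        (by rw [cgprojectRaw.source_eq hT]; exact hT.ps_mem_adjP) hm hq
  obtain ⟨q, hq⟩ := exists_marked_of_reachable (fun _ => cgprojectRaw.post_nonempty_of_mem hT) hm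
    ⟨ps, by simp [cgprojectRaw.initM_apply hT]⟩
  have hqe : q = pe := by_contra fun hqe => by simp [hzero q hqe] at hq
  funext p
  rw [cgprojectRaw.finalM_apply hT]
  split_ifs with hp
  · have := hsafe m hm pe; subst hp hqe; omega
  · exact hzero p hp

/-- The second alternative occurs when an outside transition drains the entry point before the
part has started. -/
theorem reachable_finalM_of_firingSeq (hT : N.IsSingleEntryExit T ps pe) (hsafe : N.Safe)
    (hsound : N.Sound) {σ : List ℕ} (hM : N.reachable N.initM M)
    (hσ : N.firingSeq M σ N.finalM)
    (hm : (cgprojectRaw N T).reachable (cgprojectRaw N T).initM m)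
    (h : N.IsPartMarking T pe M m) :
    (cgprojectRaw N T).reachable m (cgprojectRaw N T).finalM ∨
      ((cgprojectRaw N T).reachable m (cgprojectRaw N T).initM ∧ N.pre ps ∩ T = ∅ ∧ ps ≠ pe) := by
  have hsafe' := hT.cgprojectRaw_safe hsafe hsound
  induction σ generalizing M m with
  | nil =>
    refine Or.inl ?_
    rw [hT.eq_finalM_of_idle hsafe' hm fun q hq hqe => ?_]
    · exact reachable_refl _
    have : q ≠ N.sink := fun hs => hqe (hs ▸ hT.sink_eq_pe (hs ▸ hq))
    rw [← h.1 q hq hqe, ← firingSeq_nil.1 hσ]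
    simp [finalM, this]
  | cons u σ ih =>
    obtain ⟨M₁, hf, hσ⟩ := hσ
    by_cases huT : u ∈ T
    · obtain ⟨m', hf', h'⟩ := hT.exists_fire_of_mem huT h hf
      exact (ih (hM.fire hf) hσ (hm.fire hf') h').imp (reachable_trans hf'.reachable)
        (And.imp_left (reachable_trans hf'.reachable))
    by_cases hfeed : ps ∈ N.post u
    · rcases hT.idle_or_eq_initM_of_feed hsafe huT hfeed hM (Or.inl hm) h hf with
        hidle | ⟨rfl, hnp, hne⟩
      · rw [hT.eq_finalM_of_idle hsafe' hm hidle]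
        exact Or.inl (reachable_refl _)
      · exact Or.inr ⟨reachable_refl _, hnp, hne⟩
    by_cases hdrain : ps ∈ N.pre u ∧ ps ≠ pe
    · obtain ⟨rfl, hnp, -⟩ :=
        hT.isPartMarking_fire_of_drain huT hdrain.1 hdrain.2 hfeed (Or.inl hm) h hf
      exact Or.inr ⟨reachable_refl _, hnp, hdrain.2⟩
    · exact ih (hM.fire hf) hσ hm (hT.isPartMarking_fire_of_notMem huT hfeed
        (fun h' => by_contra fun hne => hdrain ⟨h', hne⟩) h hf)

theorem reachable_finalM_or_reachable_initM (hT : N.IsSingleEntryExit T ps pe) (hsafe : N.Safe)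
    (hsound : N.Sound) (hm : (cgprojectRaw N T).reachable (cgprojectRaw N T).initM m) :
    (cgprojectRaw N T).reachable m (cgprojectRaw N T).finalM ∨
      ((cgprojectRaw N T).reachable m (cgprojectRaw N T).initM ∧ N.pre ps ∩ T = ∅ ∧ ps ≠ pe) :=
  let ⟨_, hD, h⟩ := hT.exists_reachable_add hsafe hsound hm
  let ⟨_, hσ⟩ := hsound.2.1 _ hD
  hT.reachable_finalM_of_firingSeq hsafe hsound hD hσ hm h

theorem cgprojectRaw_reachable_initM_finalM (hT : N.IsSingleEntryExit T ps pe) (hsafe : N.Safe)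
    (hsound : N.Sound) :
    (cgprojectRaw N T).reachable (cgprojectRaw N T).initM (cgprojectRaw N T).finalM := by
  obtain ⟨t, ht⟩ := hT.produces_pe
  obtain ⟨htpe, ht⟩ := Finset.mem_inter.1 ht
  obtain ⟨m, hm, hen⟩ := hT.cgprojectRaw_live hsafe hsound ht
  obtain ⟨m', hf⟩ := exists_fire hen
  have hpe : 1 ≤ m' pe := one_le_of_fire_of_mem_post hf
    (by rw [cgprojectRaw.post_of_mem hT ht]; exact mem_post.2 (mem_pre.1 htpe))
  rcases hT.reachable_finalM_or_reachable_initM hsafe hsound (hm.fire hf) with h | ⟨h, hnp, hne⟩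
  · exact reachable_trans (hm.fire hf) h
  · -- `m'` has consumed the entry token, which nothing inside the part can give back
    have hps : m' ps = 0 := by
      by_contra h0
      have := cgprojectRaw.eq_initM_of_reachable hT hnp (hm.fire hf) (by omega)
      rw [this, cgprojectRaw.initM_apply hT, if_neg (Ne.symm hne)] at hpe
      omega
    have := reachable_apply_eq_zero
      (by rw [cgprojectRaw.pre_of_mem_adjP hT hT.ps_mem_adjP, hnp]) h hps
    simp [cgprojectRaw.initM_apply hT] at this

theorem cgprojectRaw_reachable_finalM (hT : N.IsSingleEntryExit T ps pe) (hsafe : N.Safe)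
    (hsound : N.Sound) (hm : (cgprojectRaw N T).reachable (cgprojectRaw N T).initM m) :
    (cgprojectRaw N T).reachable m (cgprojectRaw N T).finalM :=
  (hT.reachable_finalM_or_reachable_initM hsafe hsound hm).elim id fun h =>
    reachable_trans h.1 (hT.cgprojectRaw_reachable_initM_finalM hsafe hsound)

/-- Completing `m` inside `N` leaves the surplus `m - [pe]` next to a reachable marking, so
soundness of `N` forces it to vanish. -/
theorem cgprojectRaw_eq_finalM (hT : N.IsSingleEntryExit T ps pe) (hsafe : N.Safe)
    (hsound : N.Sound) (hm : (cgprojectRaw N T).reachable (cgprojectRaw N T).initM m)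
    (hpe : 1 ≤ m pe) : m = (cgprojectRaw N T).finalM := by
  obtain ⟨D, hD, -⟩ := hT.exists_reachable_add hsafe hsound hm
  have hfin := reachable_trans hD
    (cgprojectRaw.reachable_add hT (hT.cgprojectRaw_reachable_finalM hsafe hsound hm) D)
  have hsplit : (cgprojectRaw N T).finalM + D + (m - (cgprojectRaw N T).finalM) = m + D := by
    funext q
    simp only [Pi.add_apply, Pi.sub_apply, cgprojectRaw.finalM_apply hT]
    split_ifs with h
    · subst h; omega
    · omega
  have hzero := hsound.eq_zero_of_reachable_add hfin (hsplit ▸ hD)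
  funext q
  have := congrFun hzero q
  simp only [Pi.sub_apply, Pi.zero_apply, cgprojectRaw.finalM_apply hT] at this ⊢
  split_ifs at this ⊢ with h
  · have := hT.cgprojectRaw_safe hsafe hsound m hm q
    subst h; omega
  · omega

theorem cgprojectRaw_sound (hT : N.IsSingleEntryExit T ps pe) (hsafe : N.Safe)
    (hsound : N.Sound) : (cgprojectRaw N T).Sound :=
  ⟨fun _ ht => hT.cgprojectRaw_live hsafe hsound ht,
    fun _ hm => hT.cgprojectRaw_reachable_finalM hsafe hsound hm,
    fun _ hm hpe => hT.cgprojectRaw_eq_finalM hsafe hsound hm (cgprojectRaw.sink_eq hT ▸ hpe)⟩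

theorem cgprojectRaw_isOpenWF (hT : N.IsSingleEntryExit T ps pe) (hsafe : N.Safe)
    (hsound : N.Sound) : (cgprojectRaw N T).IsOpenWF where
  isPetri := cgprojectRaw.isPetri hT
  source_mem := cgprojectRaw.source_eq hT ▸ hT.ps_mem_adjP
  sink_mem := cgprojectRaw.sink_eq hT ▸ hT.pe_mem_adjP
  pre_nonempty p hp hps := by
    rw [cgprojectRaw.pre_of_mem_adjP hT hp]
    exact Finset.nonempty_iff_ne_empty.2 fun h =>
      hps (cgprojectRaw.source_eq hT ▸ hT.eq_ps_of_pre_inter_eq_empty hp h)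
  post_nonempty p hp hpe := by
    rw [cgprojectRaw.post_of_mem_adjP hT hp]
    exact Finset.nonempty_iff_ne_empty.2 fun h =>
      hpe (cgprojectRaw.sink_eq hT ▸ hT.eq_pe_of_post_inter_eq_empty hp h)
  pathRel := (hT.cgprojectRaw_sound hsafe hsound).pathRel
    (fun _ => cgprojectRaw.pre_nonempty_of_mem hT) (fun _ => cgprojectRaw.post_nonempty_of_mem hT)
    fun p hp => by
      obtain ⟨-, t, ht⟩ := mem_adjP.1 hp
      obtain ⟨htp, ht⟩ := Finset.mem_inter.1 ht
      refine ⟨t, ht, ?_⟩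
      rw [cgprojectRaw.pre_of_mem hT ht, cgprojectRaw.post_of_mem hT ht, Finset.mem_union,
        mem_pre, mem_post]
      rw [Finset.mem_union, mem_pre, mem_post] at htp
      exact htp.symm

end IsSingleEntryExit

end Net

/-- The choice-graph projection of a safe and sound WF-net
onto any part of a concurrency-hiding partition is a safe and sound WF-net. -/
theorem cgproject_safe_sound
    (N : Net) (hWF : N.IsWF) (hsafe : N.Safe) (hsound : N.Sound)
    {n : ℕ} (G : Fin n → Finset ℕ) (hch : ConcurrencyHiding N G) :
    ∀ i : Fin n,
      (cgproject N (G i)).IsWF ∧ (cgproject N (G i)).Safe ∧ (cgproject N (G i)).Sound := by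
  intro i
  obtain ⟨ps, hps⟩ := Finset.card_eq_one.1 (hch.2 i).1
  obtain ⟨pe, hpe⟩ := Finset.card_eq_one.1 (hch.2 i).2
  have hT : N.IsSingleEntryExit (G i) ps pe :=
    ⟨hWF, hch.1.2.2 ▸ Finset.subset_biUnion_of_mem G (Finset.mem_univ i), hps, hpe⟩
  have hR := hT.cgprojectRaw_isOpenWF hsafe hsound
  have hRsound := hT.cgprojectRaw_sound hsafe hsound
  exact ⟨Normalize.isWF hR, Normalize.safe hR (hT.cgprojectRaw_safe hsafe hsound) hRsound,
    Normalize.sound hR hRsound⟩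

end
end
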